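/- arXiv:2604.25528 — 2 statements merged into one kernel-verified Lean document; each statement's English description precedes it below -/
import Mathlib

section
/- Let (u, p, h) be a classical solution of the 2D Navier–Stokes system on Ω×(0,T) with data (u₀, L), where u₀ is smooth on Ω̄ with div u₀ = 0 in Ω and u₀·n = 0 on ∂Ω, and let ω₀ := curl u₀. Then for every t ∈ [0,T], (1/2)∫_Ω ω(x,t)² dx + ∫₀ᵗ ∫_Ω |∇ω(x,s)|² dx ds = (1/2)∫_Ω ω₀(x)² dx. In particular, sup_{0≤t≤T} ‖ω(·,t)‖_{L²(Ω)} ≤ ‖ω₀‖_{L²(Ω)} and (∫₀ᵀ ‖∇ω(·,t)‖²_{L²(Ω)} dt)^{1/2} ≤ (1/√2)‖ω₀‖_{L²(Ω)}. -/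
noncomputable section
open MeasureTheory Real

/-- Points of the plane `ℝ²`. -/
abbrev Pt : Type := EuclideanSpace ℝ (Fin 2)

/-- Spatial partial derivative `∂ᵢ f` of a scalar field. -/
def pd (i : Fin 2) (f : Pt → ℝ) (x : Pt) : ℝ :=
  fderiv ℝ f x (EuclideanSpace.single i 1)

/-- Scalar vorticity `curl v = ∂₁v₂ - ∂₂v₁` of a planar vector field. -/
def vort (v : Pt → Pt) (x : Pt) : ℝ :=
  pd 0 (fun y => v y 1) x - pd 1 (fun y => v y 0) x

/-- Divergence `div v = ∂₁v₁ + ∂₂v₂`. -/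
def div2 (v : Pt → Pt) (x : Pt) : ℝ :=
  pd 0 (fun y => v y 0) x + pd 1 (fun y => v y 1) x

/-- Convection term `(v·∇)v`, component `i`. -/
def conv (v : Pt → Pt) (x : Pt) (i : Fin 2) : ℝ :=
  ∑ j, v x j * pd j (fun y => v y i) x

/-- Squared pointwise norm `|v(x)|²` of a planar vector field. -/
def vecSq (v : Pt → Pt) (x : Pt) : ℝ := ∑ i, v x i ^ 2

/-- Squared pointwise norm `|∇f(x)|²` of the gradient of a scalar field. -/
def gradSq (f : Pt → ℝ) (x : Pt) : ℝ := ∑ i, pd i f x ^ 2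

/-- Squared pointwise norm `|∇v(x)|²` of the gradient of a vector field. -/
def gradVecSq (v : Pt → Pt) (x : Pt) : ℝ :=
  ∑ i, ∑ j, pd j (fun y => v y i) x ^ 2

/-- Squared pointwise norm `|∇²v(x)|²` of the Hessian of a vector field. -/
def hessVecSq (v : Pt → Pt) (x : Pt) : ℝ :=
  ∑ i, ∑ j, ∑ k, pd k (fun y => pd j (fun z => v z i) y) x ^ 2

/-- `L²(Ω)` norm of a scalar field. -/
def L2 (Ω : Set Pt) (f : Pt → ℝ) : ℝ := (∫ x in Ω, f x ^ 2) ^ (1/2 : ℝ)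

/-- `L⁴(Ω)` norm of a scalar field. -/
def L4 (Ω : Set Pt) (f : Pt → ℝ) : ℝ := (∫ x in Ω, f x ^ 4) ^ (1/4 : ℝ)

/-- `H¹(Ω)` norm of a vector field:  `(∫_Ω (|v|² + |∇v|²))^{1/2}`. -/
def H1vec (Ω : Set Pt) (v : Pt → Pt) : ℝ :=
  (∫ x in Ω, (vecSq v x + gradVecSq v x)) ^ (1/2 : ℝ)

/-- Squared `H²(Ω)` norm of a vector field: `∫_Ω (|v|² + |∇v|² + |∇²v|²)`. -/
def H2vecSq (Ω : Set Pt) (v : Pt → Pt) : ℝ :=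
  ∫ x in Ω, (vecSq v x + gradVecSq v x + hessVecSq v x)

/-- `H¹(Ω)` norm of a scalar field: `(∫_Ω (f² + |∇f|²))^{1/2}`. -/
def H1scalar (Ω : Set Pt) (f : Pt → ℝ) : ℝ :=
  (∫ x in Ω, (f x ^ 2 + gradSq f x)) ^ (1/2 : ℝ)

/-- A bounded, simply connected planar domain with smooth boundary, encoded by its
outward unit normal `n` and boundary surface measure `σ` satisfying the divergence
theorem (Gauss–Green formula) for smooth vector fields. -/
structure SmoothDomain2 where
  Ω : Set Pt
  n : Pt → Pt
  σ : Measure Pt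
  isOpen : IsOpen Ω
  bounded : Bornology.IsBounded Ω
  nonempty : Ω.Nonempty
  simplyConnected : SimplyConnectedSpace Ω
  divergence_thm : ∀ F : Pt → Pt, ContDiff ℝ (⊤ : ℕ∞) F →
    (∫ x in Ω, div2 F x) = ∫ x in frontier Ω, (∑ j, F x j * n x j) ∂σ

/-- `(u, p, h)` is a classical solution of the 2D Navier–Stokes system on `Ω × (0,T)`
with data `(u₀, L)`: all functions are smooth (up to the boundary, being globally
smooth), the momentum equation and incompressibility hold in `Ω × (0,T)`, the slip
and vorticity boundary conditions hold on `∂Ω × (0,T)`, `u(·,0) = u₀`, and the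
global vorticity invariant constraint `(1/|Ω|)∫_Ω ω dx = L` holds on `(0,T)`. -/
structure IsNSSol (D : SmoothDomain2) (T : ℝ) (u₀ : Pt → Pt) (L : ℝ)
    (u : ℝ → Pt → Pt) (p : ℝ → Pt → ℝ) (h : ℝ → ℝ) : Prop where
  smooth_u : ContDiff ℝ (⊤ : ℕ∞) (fun q : ℝ × Pt => u q.1 q.2)
  smooth_p : ContDiff ℝ (⊤ : ℕ∞) (fun q : ℝ × Pt => p q.1 q.2)
  smooth_h : ContDiff ℝ (⊤ : ℕ∞) h
  momentum : ∀ t ∈ Set.Ioo (0:ℝ) T, ∀ x ∈ D.Ω, ∀ i : Fin 2,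
    deriv (fun s => u s x i) t + conv (u t) x i + pd i (p t) x
      - (∑ j, pd j (fun y => pd j (fun z => u t z i) y) x) = 0
  divFree : ∀ t ∈ Set.Ioo (0:ℝ) T, ∀ x ∈ D.Ω, div2 (u t) x = 0
  slip : ∀ t ∈ Set.Ioo (0:ℝ) T, ∀ x ∈ frontier D.Ω,
    (∑ j, u t x j * D.n x j) = 0
  vortBC : ∀ t ∈ Set.Ioo (0:ℝ) T, ∀ x ∈ frontier D.Ω, vort (u t) x = h t
  init : ∀ x ∈ D.Ω, u 0 x = u₀ x
  vortAvg : ∀ t ∈ Set.Ioo (0:ℝ) T,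
    (1 / (volume D.Ω).toReal) * (∫ x in D.Ω, vort (u t) x) = L
open Filter
abbrev P : Type := ℝ × Pt

def Dv (v : P) (f : P → ℝ) : P → ℝ := fun q => fderiv ℝ f q v

lemma contDiff_Dv {f : P → ℝ} (hf : ContDiff ℝ (⊤ : ℕ∞) f) (v : P) : ContDiff ℝ (⊤ : ℕ∞) (Dv v f) :=
  (hf.fderiv_right (by simp)).clm_apply contDiff_const

lemma hasFDerivAt_of_contDiff {f : P → ℝ} (hf : ContDiff ℝ (⊤ : ℕ∞) f) (q : P) :
    HasFDerivAt f (fderiv ℝ f q) q :=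
  ((hf.differentiable (by simp)) q).hasFDerivAt

lemma Dv_swap {f : P → ℝ} (hf : ContDiff ℝ (⊤ : ℕ∞) f) (v w : P) (q : P) :
    Dv v (Dv w f) q = Dv w (Dv v f) q := by
  have h1 : ∀ y, HasFDerivAt f (fderiv ℝ f y) y := fun y => hasFDerivAt_of_contDiff hf y
  have h2 : HasFDerivAt (fderiv ℝ f) (fderiv ℝ (fderiv ℝ f) q) q :=
    (((hf.fderiv_right (m := (⊤ : ℕ∞)) (by simp)).differentiable (by simp)) q).hasFDerivAt
  have key : ∀ a b : P, Dv a (Dv b f) q = fderiv ℝ (fderiv ℝ f) q a b := by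
    intro a b
    have hc : HasFDerivAt (fun y => (ContinuousLinearMap.apply ℝ ℝ b) (fderiv ℝ f y))
        ((ContinuousLinearMap.apply ℝ ℝ b).comp (fderiv ℝ (fderiv ℝ f) q)) q :=
      (ContinuousLinearMap.apply ℝ ℝ b).hasFDerivAt.comp q h2
    have : Dv a (Dv b f) q = ((ContinuousLinearMap.apply ℝ ℝ b).comp
        (fderiv ℝ (fderiv ℝ f) q)) a := by
      show fderiv ℝ (fun y => fderiv ℝ f y b) q a = _
      rw [show (fun y => fderiv ℝ f y b) = fun y => (ContinuousLinearMap.apply ℝ ℝ b) (fderiv ℝ f y) from rfl, hc.fderiv]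
    simpa using this
  rw [key v w, key w v]
  exact second_derivative_symmetric h1 h2 v w

lemma Dv_swap_fun {f : P → ℝ} (hf : ContDiff ℝ (⊤ : ℕ∞) f) (v w : P) :
    Dv v (Dv w f) = Dv w (Dv v f) := funext (Dv_swap hf v w)

def ee (i : Fin 2) : Pt := EuclideanSpace.single i 1
def εx (j : Fin 2) : P := (0, ee j)
def εt : P := ((1:ℝ), 0)

lemma Dv_add {f g : P → ℝ} (hf : ContDiff ℝ (⊤ : ℕ∞) f) (hg : ContDiff ℝ (⊤ : ℕ∞) g) (v : P) (q : P) :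
    Dv v (fun q => f q + g q) q = Dv v f q + Dv v g q := by
  simp only [Dv]
  rw [fderiv_fun_add ((hf.differentiable (by simp)) q) ((hg.differentiable (by simp)) q)]
  rfl

lemma Dv_sub {f g : P → ℝ} (hf : ContDiff ℝ (⊤ : ℕ∞) f) (hg : ContDiff ℝ (⊤ : ℕ∞) g) (v : P) (q : P) :
    Dv v (fun q => f q - g q) q = Dv v f q - Dv v g q := by
  simp only [Dv]
  rw [fderiv_fun_sub ((hf.differentiable (by simp)) q) ((hg.differentiable (by simp)) q)]
  rfl

lemma Dv_mul {f g : P → ℝ} (hf : ContDiff ℝ (⊤ : ℕ∞) f) (hg : ContDiff ℝ (⊤ : ℕ∞) g) (v : P) (q : P) :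
    Dv v (fun q => f q * g q) q = f q * Dv v g q + Dv v f q * g q := by
  simp only [Dv]
  rw [fderiv_fun_mul ((hf.differentiable (by simp)) q) ((hg.differentiable (by simp)) q)]
  simp [mul_comm]

-- slice lemmas
lemma hasFDerivAt_slice_t {H : P → ℝ} (hH : ContDiff ℝ (⊤ : ℕ∞) H) (t : ℝ) (x : Pt) :
    HasFDerivAt (fun y => H (t, y))
      ((fderiv ℝ H (t, x)).comp ((0 : Pt →L[ℝ] ℝ).prod (ContinuousLinearMap.id ℝ Pt))) x := by
  have hι : HasFDerivAt (fun y : Pt => ((t, y) : P))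
      ((0 : Pt →L[ℝ] ℝ).prod (ContinuousLinearMap.id ℝ Pt)) x :=
    (hasFDerivAt_const t x).prodMk (hasFDerivAt_id x)
  exact (hasFDerivAt_of_contDiff hH (t, x)).comp x hι

lemma slice_pd {H : P → ℝ} (hH : ContDiff ℝ (⊤ : ℕ∞) H) (j : Fin 2) (t : ℝ) (x : Pt) :
    pd j (fun y => H (t, y)) x = Dv (εx j) H (t, x) := by
  rw [pd, (hasFDerivAt_slice_t hH t x).fderiv]
  simp [Dv, εx, ee]

lemma slice_hasDerivAt {H : P → ℝ} (hH : ContDiff ℝ (⊤ : ℕ∞) H) (t : ℝ) (x : Pt) :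
    HasDerivAt (fun s => H (s, x)) (Dv εt H (t, x)) t := by
  have hι : HasDerivAt (fun s : ℝ => ((s, x) : P)) (((1:ℝ), (0:Pt)) : P) t :=
    (hasDerivAt_id t).prodMk (hasDerivAt_const t x)
  exact (hasFDerivAt_of_contDiff hH (t, x)).comp_hasDerivAt t hι

lemma slice_deriv {H : P → ℝ} (hH : ContDiff ℝ (⊤ : ℕ∞) H) (t : ℝ) (x : Pt) :
    deriv (fun s => H (s, x)) t = Dv εt H (t, x) :=
  (slice_hasDerivAt hH t x).deriv

lemma contDiff_slice {H : P → ℝ} (hH : ContDiff ℝ (⊤ : ℕ∞) H) (t : ℝ) :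
    ContDiff ℝ (⊤ : ℕ∞) (fun y => H (t, y)) :=
  hH.comp (contDiff_const.prodMk contDiff_id)

lemma integrableOn_of_cont (D : SmoothDomain2) (f : Pt → ℝ) (hf : Continuous f) :
    IntegrableOn f D.Ω volume :=
  (hf.continuousOn.integrableOn_compact D.bounded.isCompact_closure).mono_set subset_closure

def V2 (f g : Pt → ℝ) : Pt → Pt := fun x => (WithLp.equiv 2 (Fin 2 → ℝ)).symm ![f x, g x]

@[simp] lemma V2_apply0 (f g : Pt → ℝ) (x : Pt) : V2 f g x 0 = f x := rfl
@[simp] lemma V2_apply1 (f g : Pt → ℝ) (x : Pt) : V2 f g x 1 = g x := rfl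

lemma contDiff_V2 {f g : Pt → ℝ} (hf : ContDiff ℝ (⊤ : ℕ∞) f) (hg : ContDiff ℝ (⊤ : ℕ∞) g) :
    ContDiff ℝ (⊤ : ℕ∞) (V2 f g) := by
  rw [contDiff_euclidean]
  intro i
  fin_cases i
  · exact hf
  · exact hg

/-- Divergence theorem in scalar components form. -/
lemma div_thm' (D : SmoothDomain2) (f g : Pt → ℝ) (hf : ContDiff ℝ (⊤ : ℕ∞) f) (hg : ContDiff ℝ (⊤ : ℕ∞) g) :
    (∫ x in D.Ω, (pd 0 f x + pd 1 g x))
      = ∫ x in frontier D.Ω, (f x * D.n x 0 + g x * D.n x 1) ∂D.σ := by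
  have h := D.divergence_thm (V2 f g) (contDiff_V2 hf hg)
  have h1 : ∀ x, div2 (V2 f g) x = pd 0 f x + pd 1 g x := by
    intro x
    rw [div2]
    congr 1
  have h2 : ∀ x, (∑ j, V2 f g x j * D.n x j) = f x * D.n x 0 + g x * D.n x 1 := by
    intro x
    rw [Fin.sum_univ_two, V2_apply0, V2_apply1]
  simp only [h1, h2] at h
  exact h

lemma hasDerivAt_setIntegral (D : SmoothDomain2) (G : P → ℝ) (hG : ContDiff ℝ (⊤ : ℕ∞) G) (t₀ : ℝ) :
    HasDerivAt (fun t => ∫ x in D.Ω, G (t, x)) (∫ x in D.Ω, Dv εt G (t₀, x)) t₀ := by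
  have hKc : IsCompact ((Set.Icc (t₀ - 1) (t₀ + 1)) ×ˢ closure D.Ω) :=
    isCompact_Icc.prod D.bounded.isCompact_closure
  obtain ⟨C, hC⟩ := hKc.exists_bound_of_continuousOn
    ((contDiff_Dv hG εt).continuous.continuousOn)
  have hmem : ∀ᵐ x ∂(volume.restrict D.Ω), x ∈ D.Ω :=
    ae_restrict_mem D.isOpen.measurableSet
  have key := hasDerivAt_integral_of_dominated_loc_of_deriv_le (F := fun t x => G (t, x))
    (F' := fun t x => Dv εt G (t, x)) (x₀ := t₀) (bound := fun _ => C)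
    (μ := volume.restrict D.Ω) (s := Metric.ball t₀ 1) (Metric.ball_mem_nhds t₀ one_pos)
    (Eventually.of_forall fun t =>
      ((hG.continuous.comp (continuous_const.prodMk continuous_id)).aestronglyMeasurable))
    (integrableOn_of_cont D _ (hG.continuous.comp (continuous_const.prodMk continuous_id)))
    (((contDiff_Dv hG εt).continuous.comp
      (continuous_const.prodMk continuous_id)).aestronglyMeasurable)
    (hmem.mono ?_) ?_ (hmem.mono ?_)
  · exact key.2
  · intro x hx t ht
    apply hC
    constructor
    · have := Metric.mem_ball.mp ht
      rw [Real.dist_eq] at this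
      constructor <;> linarith [abs_lt.mp this]
    · exact subset_closure hx
  · rw [MeasureTheory.integrable_const_iff]
    right
    exact ⟨by simpa using D.bounded.measure_lt_top⟩
  · intro x _ t _
    exact slice_hasDerivAt hG t x

lemma continuous_setIntegral (D : SmoothDomain2) (G : P → ℝ) (hG : Continuous G) :
    Continuous (fun t => ∫ x in D.Ω, G (t, x)) := by
  rw [continuous_iff_continuousAt]
  intro t₀
  have hKc : IsCompact ((Set.Icc (t₀ - 1) (t₀ + 1)) ×ˢ closure D.Ω) :=
    isCompact_Icc.prod D.bounded.isCompact_closure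
  obtain ⟨C, hC⟩ := hKc.exists_bound_of_continuousOn hG.continuousOn
  have hmem : ∀ᵐ x ∂(volume.restrict D.Ω), x ∈ D.Ω :=
    ae_restrict_mem D.isOpen.measurableSet
  apply continuousAt_of_dominated (bound := fun _ => C)
  · exact Eventually.of_forall fun t =>
      ((hG.comp (continuous_const.prodMk continuous_id)).aestronglyMeasurable)
  · filter_upwards [Metric.ball_mem_nhds t₀ one_pos] with t ht
    filter_upwards [hmem] with x hx
    apply hC
    constructor
    · have := Metric.mem_ball.mp ht
      rw [Real.dist_eq] at this
      constructor <;> linarith [abs_lt.mp this]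
    · exact subset_closure hx
  · rw [MeasureTheory.integrable_const_iff]
    right
    exact ⟨by simpa using D.bounded.measure_lt_top⟩
  · exact Eventually.of_forall fun x =>
      (hG.comp (continuous_id.prodMk continuous_const)).continuousAt

def Uc (u : ℝ → Pt → Pt) (i : Fin 2) : P → ℝ := fun q => u q.1 q.2 i
def Pc (p : ℝ → Pt → ℝ) : P → ℝ := fun q => p q.1 q.2
def Wj (u : ℝ → Pt → Pt) : P → ℝ :=
  fun q => Dv (εx 0) (Uc u 1) q - Dv (εx 1) (Uc u 0) q

section Sol
variable {u : ℝ → Pt → Pt} {p : ℝ → Pt → ℝ}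

lemma hUc (hu : ContDiff ℝ (⊤ : ℕ∞) (fun q : P => u q.1 q.2)) (i : Fin 2) : ContDiff ℝ (⊤ : ℕ∞) (Uc u i) := contDiff_euclidean.mp hu i
lemma hPc (hp : ContDiff ℝ (⊤ : ℕ∞) (fun q : P => p q.1 q.2)) : ContDiff ℝ (⊤ : ℕ∞) (Pc p) := hp
lemma hWj (hu : ContDiff ℝ (⊤ : ℕ∞) (fun q : P => u q.1 q.2)) : ContDiff ℝ (⊤ : ℕ∞) (Wj u) :=
  (contDiff_Dv (hUc hu 1) (εx 0)).sub (contDiff_Dv (hUc hu 0) (εx 1))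

lemma vort_eq (hu : ContDiff ℝ (⊤ : ℕ∞) (fun q : P => u q.1 q.2)) (t : ℝ) : vort (u t) = fun x => Wj u (t, x) := by
  funext x
  show pd 0 (fun y => Uc u 1 (t, y)) x - pd 1 (fun y => Uc u 0 (t, y)) x = _
  rw [slice_pd (hUc hu 1) 0 t x, slice_pd (hUc hu 0) 1 t x]
  rfl

lemma pd_vort_eq (hu : ContDiff ℝ (⊤ : ℕ∞) (fun q : P => u q.1 q.2)) (t : ℝ) (j : Fin 2) (x : Pt) :
    pd j (vort (u t)) x = Dv (εx j) (Wj u) (t, x) := by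
  rw [vort_eq hu t]
  exact slice_pd (hWj hu) j t x

lemma gradSq_vort_eq (hu : ContDiff ℝ (⊤ : ℕ∞) (fun q : P => u q.1 q.2)) (t : ℝ) (x : Pt) :
    gradSq (vort (u t)) x
      = Dv (εx 0) (Wj u) (t, x) ^ 2 + Dv (εx 1) (Wj u) (t, x) ^ 2 := by
  rw [gradSq, Fin.sum_univ_two, pd_vort_eq hu, pd_vort_eq hu]

def Mfun (u : ℝ → Pt → Pt) (p : ℝ → Pt → ℝ) (i : Fin 2) : P → ℝ :=
  fun q => Dv εt (Uc u i) q
    + (Uc u 0 q * Dv (εx 0) (Uc u i) q + Uc u 1 q * Dv (εx 1) (Uc u i) q)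
    + Dv (εx i) (Pc p) q
    - (Dv (εx 0) (Dv (εx 0) (Uc u i)) q + Dv (εx 1) (Dv (εx 1) (Uc u i)) q)

lemma momentum_joint (hu : ContDiff ℝ (⊤ : ℕ∞) (fun q : P => u q.1 q.2)) (hp : ContDiff ℝ (⊤ : ℕ∞) (fun q : P => p q.1 q.2)) (D : SmoothDomain2) (T : ℝ) (u₀ : Pt → Pt) (L : ℝ) (h : ℝ → ℝ)
    (hsol : IsNSSol D T u₀ L u p h) (i : Fin 2) (t : ℝ) (ht : t ∈ Set.Ioo 0 T)
    (x : Pt) (hx : x ∈ D.Ω) : Mfun u p i (t, x) = 0 := by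
  have hm := hsol.momentum t ht x hx i
  have e1 : deriv (fun s => u s x i) t = Dv εt (Uc u i) (t, x) := slice_deriv (hUc hu i) t x
  have e2 : conv (u t) x i
      = Uc u 0 (t, x) * Dv (εx 0) (Uc u i) (t, x)
        + Uc u 1 (t, x) * Dv (εx 1) (Uc u i) (t, x) := by
    rw [conv, Fin.sum_univ_two]
    rw [show (fun y => u t y i) = fun y => Uc u i (t, y) from rfl,
      slice_pd (hUc hu i) 0 t x, slice_pd (hUc hu i) 1 t x]
    rfl
  have e3 : pd i (p t) x = Dv (εx i) (Pc p) (t, x) := slice_pd (hPc hp) i t x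
  have e4 : ∀ j : Fin 2, (fun y => pd j (fun z => u t z i) y)
      = fun y => Dv (εx j) (Uc u i) (t, y) := by
    intro j
    funext y
    exact slice_pd (hUc hu i) j t y
  have e5 : (∑ j, pd j (fun y => pd j (fun z => u t z i) y) x)
      = Dv (εx 0) (Dv (εx 0) (Uc u i)) (t, x) + Dv (εx 1) (Dv (εx 1) (Uc u i)) (t, x) := by
    rw [Fin.sum_univ_two, e4 0, e4 1,
      slice_pd (contDiff_Dv (hUc hu i) (εx 0)) 0 t x,
      slice_pd (contDiff_Dv (hUc hu i) (εx 1)) 1 t x]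
  rw [e1, e2, e3, e5] at hm
  rw [Mfun]
  linarith
end Sol

section Expand
variable {u : ℝ → Pt → Pt} {p : ℝ → Pt → ℝ}

lemma Dv_Mfun (hu : ContDiff ℝ (⊤ : ℕ∞) (fun q : P => u q.1 q.2))
    (hp : ContDiff ℝ (⊤ : ℕ∞) (fun q : P => p q.1 q.2)) (v : P) (i : Fin 2) (q : P) :
    Dv v (Mfun u p i) q
      = Dv v (Dv εt (Uc u i)) q
        + ((Uc u 0 q * Dv v (Dv (εx 0) (Uc u i)) q + Dv v (Uc u 0) q * Dv (εx 0) (Uc u i) q)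
          + (Uc u 1 q * Dv v (Dv (εx 1) (Uc u i)) q + Dv v (Uc u 1) q * Dv (εx 1) (Uc u i) q))
        + Dv v (Dv (εx i) (Pc p)) q
        - (Dv v (Dv (εx 0) (Dv (εx 0) (Uc u i))) q
          + Dv v (Dv (εx 1) (Dv (εx 1) (Uc u i))) q) := by
  have h1 := hasFDerivAt_of_contDiff (contDiff_Dv (hUc hu i) εt) q
  have h2 := hasFDerivAt_of_contDiff (hUc hu 0) q
  have h3 := hasFDerivAt_of_contDiff (contDiff_Dv (hUc hu i) (εx 0)) q
  have h4 := hasFDerivAt_of_contDiff (hUc hu 1) q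
  have h5 := hasFDerivAt_of_contDiff (contDiff_Dv (hUc hu i) (εx 1)) q
  have h6 := hasFDerivAt_of_contDiff (contDiff_Dv (hPc hp) (εx i)) q
  have h7 := hasFDerivAt_of_contDiff (contDiff_Dv (contDiff_Dv (hUc hu i) (εx 0)) (εx 0)) q
  have h8 := hasFDerivAt_of_contDiff (contDiff_Dv (contDiff_Dv (hUc hu i) (εx 1)) (εx 1)) q
  have H : HasFDerivAt (Mfun u p i)
      ((((fderiv ℝ (Dv εt (Uc u i)) q
        + ((Uc u 0 q • fderiv ℝ (Dv (εx 0) (Uc u i)) q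
            + Dv (εx 0) (Uc u i) q • fderiv ℝ (Uc u 0) q)
          + (Uc u 1 q • fderiv ℝ (Dv (εx 1) (Uc u i)) q
            + Dv (εx 1) (Uc u i) q • fderiv ℝ (Uc u 1) q)))
        + fderiv ℝ (Dv (εx i) (Pc p)) q)
        - (fderiv ℝ (Dv (εx 0) (Dv (εx 0) (Uc u i))) q
          + fderiv ℝ (Dv (εx 1) (Dv (εx 1) (Uc u i))) q))) q := by
    exact ((h1.add ((h2.mul h3).add (h4.mul h5))).add h6).sub (h7.add h8)
  have hd : Dv v (Mfun u p i) q = fderiv ℝ (Mfun u p i) q v := rfl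
  rw [hd, H.fderiv]
  simp only [ContinuousLinearMap.add_apply, ContinuousLinearMap.coe_sub',
    Pi.sub_apply, ContinuousLinearMap.smul_apply, smul_eq_mul]
  show _ = _ + ((_ + Dv v (Uc u 0) q * _) + (_ + Dv v (Uc u 1) q * _)) + _ - _
  simp only [Dv]
  ring
end Expand

section Veq
variable {u : ℝ → Pt → Pt} {p : ℝ → Pt → ℝ}

lemma vort_eqn (hu : ContDiff ℝ (⊤ : ℕ∞) (fun q : P => u q.1 q.2))
    (hp : ContDiff ℝ (⊤ : ℕ∞) (fun q : P => p q.1 q.2))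
    (D : SmoothDomain2) (T : ℝ) (u₀ : Pt → Pt) (L : ℝ) (h : ℝ → ℝ)
    (hsol : IsNSSol D T u₀ L u p h) (t : ℝ) (ht : t ∈ Set.Ioo 0 T)
    (x : Pt) (hx : x ∈ D.Ω) :
    Dv εt (Wj u) (t, x)
      = (Dv (εx 0) (Dv (εx 0) (Wj u)) (t, x) + Dv (εx 1) (Dv (εx 1) (Wj u)) (t, x))
        - (Uc u 0 (t, x) * Dv (εx 0) (Wj u) (t, x)
          + Uc u 1 (t, x) * Dv (εx 1) (Wj u) (t, x)) := by
  have hSopen : IsOpen (Set.Ioo (0:ℝ) T ×ˢ D.Ω) := isOpen_Ioo.prod D.isOpen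
  have hqS : ((t, x) : P) ∈ Set.Ioo (0:ℝ) T ×ˢ D.Ω := ⟨ht, hx⟩
  have hM : ∀ i v, Dv v (Mfun u p i) (t, x) = 0 := by
    intro i v
    have heq : Mfun u p i =ᶠ[nhds ((t, x) : P)] (fun _ => (0:ℝ)) := by
      filter_upwards [hSopen.mem_nhds hqS] with q hq
      exact momentum_joint hu hp D T u₀ L h hsol i q.1 hq.1 q.2 hq.2
    show fderiv ℝ (Mfun u p i) (t, x) v = 0
    rw [heq.fderiv_eq]
    simp
  have hM1 := hM 1 (εx 0)
  have hM0 := hM 0 (εx 1)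
  rw [Dv_Mfun hu hp] at hM1 hM0
  have hdiv : Dv (εx 0) (Uc u 0) (t, x) + Dv (εx 1) (Uc u 1) (t, x) = 0 := by
    have hd := hsol.divFree t ht x hx
    rw [div2] at hd
    rw [show (fun y => u t y 0) = fun y => Uc u 0 (t, y) from rfl,
      show (fun y => u t y 1) = fun y => Uc u 1 (t, y) from rfl,
      slice_pd (hUc hu 0) 0 t x, slice_pd (hUc hu 1) 1 t x] at hd
    exact hd
  -- canonicalize hM1
  rw [Dv_swap (hUc hu 1) (εx 0) εt (t, x),
    Dv_swap (contDiff_Dv (hUc hu 1) (εx 1)) (εx 0) (εx 1) (t, x),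
    Dv_swap_fun (hUc hu 1) (εx 0) (εx 1),
    Dv_swap (hPc hp) (εx 0) (εx 1) (t, x)] at hM1
  -- canonicalize hM0
  rw [Dv_swap (hUc hu 0) (εx 1) εt (t, x),
    Dv_swap (contDiff_Dv (hUc hu 0) (εx 0)) (εx 1) (εx 0) (t, x),
    Dv_swap_fun (hUc hu 0) (εx 1) (εx 0)] at hM0
  -- expand W derivatives in the goal
  have eW : ∀ (v : P) (q : P), Dv v (Wj u) q
      = Dv v (Dv (εx 0) (Uc u 1)) q - Dv v (Dv (εx 1) (Uc u 0)) q := fun v q =>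
    Dv_sub (contDiff_Dv (hUc hu 1) (εx 0)) (contDiff_Dv (hUc hu 0) (εx 1)) v q
  have eWf : ∀ v : P, Dv v (Wj u)
      = fun q => Dv v (Dv (εx 0) (Uc u 1)) q - Dv v (Dv (εx 1) (Uc u 0)) q := fun v =>
    funext (eW v)
  have eWW : ∀ (w v : P) (q : P), Dv w (Dv v (Wj u)) q
      = Dv w (Dv v (Dv (εx 0) (Uc u 1))) q - Dv w (Dv v (Dv (εx 1) (Uc u 0))) q := by
    intro w v q
    rw [eWf v]
    exact Dv_sub (contDiff_Dv (contDiff_Dv (hUc hu 1) (εx 0)) v)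
      (contDiff_Dv (contDiff_Dv (hUc hu 0) (εx 1)) v) w q
  rw [eWW (εx 0) (εx 0) (t, x), eWW (εx 1) (εx 1) (t, x),
    eW εt (t, x), eW (εx 0) (t, x), eW (εx 1) (t, x)]
  linear_combination hM1 - hM0
    - (Dv (εx 0) (Uc u 1) (t, x) - Dv (εx 1) (Uc u 0) (t, x)) * hdiv
end Veq

section Integrals
variable {u : ℝ → Pt → Pt} {p : ℝ → Pt → ℝ}

lemma div_joint (hu : ContDiff ℝ (⊤ : ℕ∞) (fun q : P => u q.1 q.2))
    (D : SmoothDomain2) (T : ℝ) (u₀ : Pt → Pt) (L : ℝ) (h : ℝ → ℝ)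
    (hsol : IsNSSol D T u₀ L u p h) (t : ℝ) (ht : t ∈ Set.Ioo 0 T)
    (x : Pt) (hx : x ∈ D.Ω) :
    Dv (εx 0) (Uc u 0) (t, x) + Dv (εx 1) (Uc u 1) (t, x) = 0 := by
  have hd := hsol.divFree t ht x hx
  rw [div2] at hd
  rw [show (fun y => u t y 0) = fun y => Uc u 0 (t, y) from rfl,
    show (fun y => u t y 1) = fun y => Uc u 1 (t, y) from rfl,
    slice_pd (hUc hu 0) 0 t x, slice_pd (hUc hu 1) 1 t x] at hd
  exact hd

lemma div_slice (D : SmoothDomain2) (H0 H1 : P → ℝ)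
    (h0 : ContDiff ℝ (⊤ : ℕ∞) H0) (h1 : ContDiff ℝ (⊤ : ℕ∞) H1) (t : ℝ) :
    (∫ x in D.Ω, (Dv (εx 0) H0 (t, x) + Dv (εx 1) H1 (t, x)))
      = ∫ x in frontier D.Ω, (H0 (t, x) * D.n x 0 + H1 (t, x) * D.n x 1) ∂D.σ := by
  have key := div_thm' D (fun x => H0 (t, x)) (fun x => H1 (t, x))
    (contDiff_slice h0 t) (contDiff_slice h1 t)
  simp only [slice_pd h0 0 t, slice_pd h1 1 t] at key
  exact key

lemma intA (hu : ContDiff ℝ (⊤ : ℕ∞) (fun q : P => u q.1 q.2))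
    (D : SmoothDomain2) {T : ℝ} (u₀ : Pt → Pt) (L : ℝ) (h : ℝ → ℝ)
    (hsol : IsNSSol D T u₀ L u p h) (t : ℝ) (ht : t ∈ Set.Ioo 0 T) :
    (∫ x in D.Ω, (Uc u 0 (t, x) * Dv (εx 0) (Wj u) (t, x)
      + Uc u 1 (t, x) * Dv (εx 1) (Wj u) (t, x))) = 0 := by
  have key := div_slice D (fun q => Uc u 0 q * Wj u q) (fun q => Uc u 1 q * Wj u q)
    ((hUc hu 0).mul (hWj hu)) ((hUc hu 1).mul (hWj hu)) t
  have e1 : Set.EqOn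
      (fun x => Uc u 0 (t, x) * Dv (εx 0) (Wj u) (t, x)
        + Uc u 1 (t, x) * Dv (εx 1) (Wj u) (t, x))
      (fun x => Dv (εx 0) (fun q => Uc u 0 q * Wj u q) (t, x)
        + Dv (εx 1) (fun q => Uc u 1 q * Wj u q) (t, x)) D.Ω := by
    intro x hx
    simp only
    rw [Dv_mul (hUc hu 0) (hWj hu), Dv_mul (hUc hu 1) (hWj hu)]
    linear_combination (-(Wj u (t, x))) * div_joint hu D T u₀ L h hsol t ht x hx
  have e2 : Set.EqOn
      (fun x => (fun q => Uc u 0 q * Wj u q) (t, x) * D.n x 0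
        + (fun q => Uc u 1 q * Wj u q) (t, x) * D.n x 1)
      (fun _ => (0:ℝ)) (frontier D.Ω) := by
    intro x hx
    have hs := hsol.slip t ht x hx
    rw [Fin.sum_univ_two] at hs
    simp only
    have h0 : Uc u 0 (t, x) = u t x 0 := rfl
    have h1 : Uc u 1 (t, x) = u t x 1 := rfl
    rw [h0, h1]
    linear_combination (Wj u (t, x)) * hs
  rw [setIntegral_congr_fun D.isOpen.measurableSet e1, key,
    setIntegral_congr_fun isClosed_frontier.measurableSet e2, integral_zero]
end Integrals

section Integrals2
variable {u : ℝ → Pt → Pt} {p : ℝ → Pt → ℝ}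

lemma intB (hu : ContDiff ℝ (⊤ : ℕ∞) (fun q : P => u q.1 q.2))
    (D : SmoothDomain2) {T : ℝ} (u₀ : Pt → Pt) (L : ℝ) (h : ℝ → ℝ)
    (hsol : IsNSSol D T u₀ L u p h) (t : ℝ) (ht : t ∈ Set.Ioo 0 T) :
    (∫ x in D.Ω, Wj u (t, x) * (Uc u 0 (t, x) * Dv (εx 0) (Wj u) (t, x)
      + Uc u 1 (t, x) * Dv (εx 1) (Wj u) (t, x))) = 0 := by
  have hWW : ContDiff ℝ (⊤ : ℕ∞) (fun q : P => Wj u q * Wj u q) := (hWj hu).mul (hWj hu)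
  have key := div_slice D (fun q => Uc u 0 q * (Wj u q * Wj u q))
    (fun q => Uc u 1 q * (Wj u q * Wj u q))
    ((hUc hu 0).mul hWW) ((hUc hu 1).mul hWW) t
  have e1 : Set.EqOn
      (fun x => Dv (εx 0) (fun q => Uc u 0 q * (Wj u q * Wj u q)) (t, x)
        + Dv (εx 1) (fun q => Uc u 1 q * (Wj u q * Wj u q)) (t, x))
      (fun x => 2 * (Wj u (t, x) * (Uc u 0 (t, x) * Dv (εx 0) (Wj u) (t, x)
        + Uc u 1 (t, x) * Dv (εx 1) (Wj u) (t, x)))) D.Ω := by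
    intro x hx
    simp only
    rw [Dv_mul (hUc hu 0) hWW, Dv_mul (hUc hu 1) hWW,
      Dv_mul (hWj hu) (hWj hu), Dv_mul (hWj hu) (hWj hu)]
    linear_combination (Wj u (t, x) * Wj u (t, x)) * div_joint hu D T u₀ L h hsol t ht x hx
  have e2 : Set.EqOn
      (fun x => (fun q => Uc u 0 q * (Wj u q * Wj u q)) (t, x) * D.n x 0
        + (fun q => Uc u 1 q * (Wj u q * Wj u q)) (t, x) * D.n x 1)
      (fun _ => (0:ℝ)) (frontier D.Ω) := by
    intro x hx
    have hs := hsol.slip t ht x hx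
    rw [Fin.sum_univ_two] at hs
    simp only
    have h0 : Uc u 0 (t, x) = u t x 0 := rfl
    have h1 : Uc u 1 (t, x) = u t x 1 := rfl
    rw [h0, h1]
    linear_combination (Wj u (t, x) * Wj u (t, x)) * hs
  rw [setIntegral_congr_fun D.isOpen.measurableSet e1,
    setIntegral_congr_fun isClosed_frontier.measurableSet e2, integral_zero,
    MeasureTheory.integral_const_mul] at key
  linarith

lemma intD (hu : ContDiff ℝ (⊤ : ℕ∞) (fun q : P => u q.1 q.2)) (D : SmoothDomain2) (t : ℝ) :
    (∫ x in D.Ω, (Dv (εx 0) (Dv (εx 0) (Wj u)) (t, x) + Dv (εx 1) (Dv (εx 1) (Wj u)) (t, x)))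
      = ∫ x in frontier D.Ω, (Dv (εx 0) (Wj u) (t, x) * D.n x 0
          + Dv (εx 1) (Wj u) (t, x) * D.n x 1) ∂D.σ :=
  div_slice D (Dv (εx 0) (Wj u)) (Dv (εx 1) (Wj u))
    (contDiff_Dv (hWj hu) (εx 0)) (contDiff_Dv (hWj hu) (εx 1)) t

lemma intC (hu : ContDiff ℝ (⊤ : ℕ∞) (fun q : P => u q.1 q.2))
    (D : SmoothDomain2) {T : ℝ} (u₀ : Pt → Pt) (L : ℝ) (h : ℝ → ℝ)
    (hsol : IsNSSol D T u₀ L u p h) (t : ℝ) (ht : t ∈ Set.Ioo 0 T) :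
    (∫ x in D.Ω, ((Dv (εx 0) (Wj u) (t, x) * Dv (εx 0) (Wj u) (t, x)
        + Dv (εx 1) (Wj u) (t, x) * Dv (εx 1) (Wj u) (t, x))
      + Wj u (t, x) * (Dv (εx 0) (Dv (εx 0) (Wj u)) (t, x)
        + Dv (εx 1) (Dv (εx 1) (Wj u)) (t, x))))
      = h t * ∫ x in frontier D.Ω, (Dv (εx 0) (Wj u) (t, x) * D.n x 0
          + Dv (εx 1) (Wj u) (t, x) * D.n x 1) ∂D.σ := by
  have key := div_slice D (fun q => Wj u q * Dv (εx 0) (Wj u) q)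
    (fun q => Wj u q * Dv (εx 1) (Wj u) q)
    ((hWj hu).mul (contDiff_Dv (hWj hu) (εx 0)))
    ((hWj hu).mul (contDiff_Dv (hWj hu) (εx 1))) t
  have e1 : (fun x => Dv (εx 0) (fun q => Wj u q * Dv (εx 0) (Wj u) q) (t, x)
        + Dv (εx 1) (fun q => Wj u q * Dv (εx 1) (Wj u) q) (t, x))
      = fun x => ((Dv (εx 0) (Wj u) (t, x) * Dv (εx 0) (Wj u) (t, x)
        + Dv (εx 1) (Wj u) (t, x) * Dv (εx 1) (Wj u) (t, x))
      + Wj u (t, x) * (Dv (εx 0) (Dv (εx 0) (Wj u)) (t, x)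
        + Dv (εx 1) (Dv (εx 1) (Wj u)) (t, x))) := by
    funext x
    rw [Dv_mul (hWj hu) (contDiff_Dv (hWj hu) (εx 0)),
      Dv_mul (hWj hu) (contDiff_Dv (hWj hu) (εx 1))]
    ring
  have e2 : Set.EqOn
      (fun x => (fun q => Wj u q * Dv (εx 0) (Wj u) q) (t, x) * D.n x 0
        + (fun q => Wj u q * Dv (εx 1) (Wj u) q) (t, x) * D.n x 1)
      (fun x => h t * (Dv (εx 0) (Wj u) (t, x) * D.n x 0
        + Dv (εx 1) (Wj u) (t, x) * D.n x 1)) (frontier D.Ω) := by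
    intro x hx
    have hb := hsol.vortBC t ht x hx
    rw [vort_eq hu t] at hb
    simp only at hb ⊢
    rw [hb]
    ring
  rw [e1, setIntegral_congr_fun isClosed_frontier.measurableSet e2,
    MeasureTheory.integral_const_mul] at key
  exact key
end Integrals2

section Integrals3
variable {u : ℝ → Pt → Pt} {p : ℝ → Pt → ℝ}

lemma intTW (hu : ContDiff ℝ (⊤ : ℕ∞) (fun q : P => u q.1 q.2))
    (D : SmoothDomain2) {T : ℝ} (u₀ : Pt → Pt) (L : ℝ) (h : ℝ → ℝ)
    (hsol : IsNSSol D T u₀ L u p h) (t : ℝ) (ht : t ∈ Set.Ioo 0 T) :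
    (∫ x in D.Ω, Dv εt (Wj u) (t, x)) = 0 := by
  have hd := hasDerivAt_setIntegral D (Wj u) (hWj hu) t
  have hV : (volume D.Ω).toReal ≠ 0 := by
    have h1 : 0 < volume D.Ω := D.isOpen.measure_pos volume D.nonempty
    have h2 : volume D.Ω < ⊤ := D.bounded.measure_lt_top
    exact (ENNReal.toReal_pos h1.ne' h2.ne).ne'
  have hconst : (fun s => ∫ x in D.Ω, Wj u (s, x))
      =ᶠ[nhds t] fun _ => L * (volume D.Ω).toReal := by
    filter_upwards [isOpen_Ioo.mem_nhds ht] with s hs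
    have ha := hsol.vortAvg s hs
    rw [vort_eq hu s] at ha
    field_simp at ha
    linarith
  have hd0 : HasDerivAt (fun s => ∫ x in D.Ω, Wj u (s, x)) 0 t :=
    (hasDerivAt_const t (L * (volume D.Ω).toReal)).congr_of_eventuallyEq hconst
  exact hd.unique hd0

lemma intE (hu : ContDiff ℝ (⊤ : ℕ∞) (fun q : P => u q.1 q.2))
    (hp : ContDiff ℝ (⊤ : ℕ∞) (fun q : P => p q.1 q.2))
    (D : SmoothDomain2) {T : ℝ} (u₀ : Pt → Pt) (L : ℝ) (h : ℝ → ℝ)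
    (hsol : IsNSSol D T u₀ L u p h) (t : ℝ) (ht : t ∈ Set.Ioo 0 T) :
    (∫ x in D.Ω, (Dv (εx 0) (Dv (εx 0) (Wj u)) (t, x)
      + Dv (εx 1) (Dv (εx 1) (Wj u)) (t, x))) = 0 := by
  have e1 : Set.EqOn
      (fun x => Dv (εx 0) (Dv (εx 0) (Wj u)) (t, x) + Dv (εx 1) (Dv (εx 1) (Wj u)) (t, x))
      (fun x => Dv εt (Wj u) (t, x)
        + (Uc u 0 (t, x) * Dv (εx 0) (Wj u) (t, x)
          + Uc u 1 (t, x) * Dv (εx 1) (Wj u) (t, x))) D.Ω := by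
    intro x hx
    have := vort_eqn hu hp D T u₀ L h hsol t ht x hx
    simp only
    linarith
  rw [setIntegral_congr_fun D.isOpen.measurableSet e1]
  rw [MeasureTheory.integral_add]
  · rw [intTW hu D u₀ L h hsol t ht, intA hu D u₀ L h hsol t ht]
    ring
  · exact integrableOn_of_cont D _ (contDiff_slice (contDiff_Dv (hWj hu) εt) t).continuous
  · apply integrableOn_of_cont D _
    exact (contDiff_slice (((hUc hu 0).mul (contDiff_Dv (hWj hu) (εx 0))).add
      ((hUc hu 1).mul (contDiff_Dv (hWj hu) (εx 1)))) t).continuous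
end Integrals3

section Energy
variable {u : ℝ → Pt → Pt} {p : ℝ → Pt → ℝ}

lemma energy_deriv (hu : ContDiff ℝ (⊤ : ℕ∞) (fun q : P => u q.1 q.2))
    (hp : ContDiff ℝ (⊤ : ℕ∞) (fun q : P => p q.1 q.2))
    (D : SmoothDomain2) {T : ℝ} (u₀ : Pt → Pt) (L : ℝ) (h : ℝ → ℝ)
    (hsol : IsNSSol D T u₀ L u p h) (t : ℝ) (ht : t ∈ Set.Ioo 0 T) :
    HasDerivAt (fun s => ∫ x in D.Ω, Wj u (s, x) * Wj u (s, x))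
      (-2 * ∫ x in D.Ω, (Dv (εx 0) (Wj u) (t, x) * Dv (εx 0) (Wj u) (t, x)
        + Dv (εx 1) (Wj u) (t, x) * Dv (εx 1) (Wj u) (t, x))) t := by
  have hWW : ContDiff ℝ (⊤ : ℕ∞) (fun q : P => Wj u q * Wj u q) := (hWj hu).mul (hWj hu)
  have hd := hasDerivAt_setIntegral D (fun q => Wj u q * Wj u q) hWW t
  have key : (∫ x in D.Ω, Dv εt (fun q => Wj u q * Wj u q) (t, x))
      = -2 * ∫ x in D.Ω, (Dv (εx 0) (Wj u) (t, x) * Dv (εx 0) (Wj u) (t, x)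
        + Dv (εx 1) (Wj u) (t, x) * Dv (εx 1) (Wj u) (t, x)) := by
    have e1 : Set.EqOn (fun x => Dv εt (fun q => Wj u q * Wj u q) (t, x))
        (fun x => 2 * (Wj u (t, x) * (Dv (εx 0) (Dv (εx 0) (Wj u)) (t, x)
            + Dv (εx 1) (Dv (εx 1) (Wj u)) (t, x)))
          - 2 * (Wj u (t, x) * (Uc u 0 (t, x) * Dv (εx 0) (Wj u) (t, x)
            + Uc u 1 (t, x) * Dv (εx 1) (Wj u) (t, x)))) D.Ω := by
      intro x hx
      have hv := vort_eqn hu hp D T u₀ L h hsol t ht x hx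
      simp only
      rw [Dv_mul (hWj hu) (hWj hu)]
      rw [hv]
      ring
    rw [setIntegral_congr_fun D.isOpen.measurableSet e1]
    have i1 : IntegrableOn (fun x => 2 * (Wj u (t, x) * (Dv (εx 0) (Dv (εx 0) (Wj u)) (t, x)
        + Dv (εx 1) (Dv (εx 1) (Wj u)) (t, x)))) D.Ω volume := by
      apply integrableOn_of_cont D _
      exact (contDiff_slice (contDiff_const.mul ((hWj hu).mul
        ((contDiff_Dv (contDiff_Dv (hWj hu) (εx 0)) (εx 0)).add
          (contDiff_Dv (contDiff_Dv (hWj hu) (εx 1)) (εx 1))))) t).continuous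
    have i2 : IntegrableOn (fun x => 2 * (Wj u (t, x) * (Uc u 0 (t, x) * Dv (εx 0) (Wj u) (t, x)
        + Uc u 1 (t, x) * Dv (εx 1) (Wj u) (t, x)))) D.Ω volume := by
      apply integrableOn_of_cont D _
      exact (contDiff_slice (contDiff_const.mul ((hWj hu).mul
        (((hUc hu 0).mul (contDiff_Dv (hWj hu) (εx 0))).add
          ((hUc hu 1).mul (contDiff_Dv (hWj hu) (εx 1)))))) t).continuous
    rw [MeasureTheory.integral_sub i1 i2, MeasureTheory.integral_const_mul,
      MeasureTheory.integral_const_mul, intB hu D u₀ L h hsol t ht]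
    -- now compute ∫ W * ΔW
    have hC := intC hu D u₀ L h hsol t ht
    have hD := intD hu D t
    have hE := intE hu hp D u₀ L h hsol t ht
    rw [← hD, hE, mul_zero] at hC
    have isplit : (∫ x in D.Ω, ((Dv (εx 0) (Wj u) (t, x) * Dv (εx 0) (Wj u) (t, x)
        + Dv (εx 1) (Wj u) (t, x) * Dv (εx 1) (Wj u) (t, x))
      + Wj u (t, x) * (Dv (εx 0) (Dv (εx 0) (Wj u)) (t, x)
        + Dv (εx 1) (Dv (εx 1) (Wj u)) (t, x))))
        = (∫ x in D.Ω, (Dv (εx 0) (Wj u) (t, x) * Dv (εx 0) (Wj u) (t, x)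
        + Dv (εx 1) (Wj u) (t, x) * Dv (εx 1) (Wj u) (t, x)))
        + ∫ x in D.Ω, Wj u (t, x) * (Dv (εx 0) (Dv (εx 0) (Wj u)) (t, x)
        + Dv (εx 1) (Dv (εx 1) (Wj u)) (t, x)) := by
      apply MeasureTheory.integral_add
      · apply integrableOn_of_cont D _
        exact (contDiff_slice (((contDiff_Dv (hWj hu) (εx 0)).mul
          (contDiff_Dv (hWj hu) (εx 0))).add ((contDiff_Dv (hWj hu) (εx 1)).mul
          (contDiff_Dv (hWj hu) (εx 1)))) t).continuous
      · apply integrableOn_of_cont D _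
        exact (contDiff_slice ((hWj hu).mul
          ((contDiff_Dv (contDiff_Dv (hWj hu) (εx 0)) (εx 0)).add
            (contDiff_Dv (contDiff_Dv (hWj hu) (εx 1)) (εx 1)))) t).continuous
    rw [isplit] at hC
    linarith
  rw [key] at hd
  exact hd
end Energy

section Main
variable {u : ℝ → Pt → Pt} {p : ℝ → Pt → ℝ}

lemma vort_init (hu : ContDiff ℝ (⊤ : ℕ∞) (fun q : P => u q.1 q.2))
    (D : SmoothDomain2) {T : ℝ} (u₀ : Pt → Pt) (L : ℝ) (h : ℝ → ℝ)
    (hsol : IsNSSol D T u₀ L u p h) (x : Pt) (hx : x ∈ D.Ω) :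
    vort (u 0) x = vort u₀ x := by
  have e1 : (fun y => u 0 y 1) =ᶠ[nhds x] (fun y => u₀ y 1) := by
    filter_upwards [D.isOpen.mem_nhds hx] with y hy
    rw [hsol.init y hy]
  have e0 : (fun y => u 0 y 0) =ᶠ[nhds x] (fun y => u₀ y 0) := by
    filter_upwards [D.isOpen.mem_nhds hx] with y hy
    rw [hsol.init y hy]
  rw [vort, vort, pd, pd, pd, pd, e1.fderiv_eq, e0.fderiv_eq]

theorem vorticity_energy_identity'
    (D : SmoothDomain2) (T : ℝ) (hT : 0 < T)
    (u₀ : Pt → Pt) (L : ℝ) (u : ℝ → Pt → Pt) (p : ℝ → Pt → ℝ) (h : ℝ → ℝ)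
    (hu₀ : ContDiff ℝ (⊤ : ℕ∞) u₀)
    (hdiv₀ : ∀ x ∈ D.Ω, div2 u₀ x = 0)
    (hslip₀ : ∀ x ∈ frontier D.Ω, (∑ j, u₀ x j * D.n x j) = 0)
    (hsol : IsNSSol D T u₀ L u p h) :
    (∀ t ∈ Set.Icc (0:ℝ) T,
      (1/2) * (∫ x in D.Ω, vort (u t) x ^ 2)
        + (∫ s in (0:ℝ)..t, ∫ x in D.Ω, gradSq (vort (u s)) x)
      = (1/2) * ∫ x in D.Ω, vort u₀ x ^ 2)
    ∧ (∀ t ∈ Set.Icc (0:ℝ) T, L2 D.Ω (vort (u t)) ≤ L2 D.Ω (vort u₀))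
    ∧ (∫ t in (0:ℝ)..T, ∫ x in D.Ω, gradSq (vort (u t)) x) ^ (1/2 : ℝ)
        ≤ (1 / Real.sqrt 2) * L2 D.Ω (vort u₀) := by
  have hu := hsol.smooth_u
  have hp := hsol.smooth_p
  set E : ℝ → ℝ := fun s => ∫ x in D.Ω, Wj u (s, x) * Wj u (s, x) with hE_def
  set g : ℝ → ℝ := fun s => ∫ x in D.Ω, (Dv (εx 0) (Wj u) (s, x) * Dv (εx 0) (Wj u) (s, x)
    + Dv (εx 1) (Wj u) (s, x) * Dv (εx 1) (Wj u) (s, x)) with hg_def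
  -- identification of E with the vorticity L² norm squared
  have hEeq : ∀ s : ℝ, (∫ x in D.Ω, vort (u s) x ^ 2) = E s := by
    intro s
    have : ∀ x : Pt, vort (u s) x ^ 2 = Wj u (s, x) * Wj u (s, x) := by
      intro x
      rw [vort_eq hu s]
      ring
    simp only [this, hE_def]
  -- identification of g with the gradient integral
  have hgeq : ∀ s : ℝ, (∫ x in D.Ω, gradSq (vort (u s)) x) = g s := by
    intro s
    have : ∀ x : Pt, gradSq (vort (u s)) x
        = Dv (εx 0) (Wj u) (s, x) * Dv (εx 0) (Wj u) (s, x)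
          + Dv (εx 1) (Wj u) (s, x) * Dv (εx 1) (Wj u) (s, x) := by
      intro x
      rw [gradSq_vort_eq hu s x]
      ring
    simp only [this, hg_def]
  have hgcont : Continuous g := by
    exact continuous_setIntegral D
      (fun q => Dv (εx 0) (Wj u) q * Dv (εx 0) (Wj u) q
        + Dv (εx 1) (Wj u) q * Dv (εx 1) (Wj u) q)
      (((contDiff_Dv (hWj hu) (εx 0)).mul (contDiff_Dv (hWj hu) (εx 0))).add
      ((contDiff_Dv (hWj hu) (εx 1)).mul (contDiff_Dv (hWj hu) (εx 1)))).continuous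
  have hgnonneg : ∀ s : ℝ, 0 ≤ g s := by
    intro s
    apply setIntegral_nonneg D.isOpen.measurableSet
    intro x _
    have := mul_self_nonneg (Dv (εx 0) (Wj u) (s, x))
    have := mul_self_nonneg (Dv (εx 1) (Wj u) (s, x))
    linarith
  -- the combined functional φ
  set φ : ℝ → ℝ := fun s => (1/2) * E s + ∫ r in (0:ℝ)..s, g r with hφ_def
  have hφderiv : ∀ t : ℝ, HasDerivAt φ ((1/2) * (∫ x in D.Ω, Dv εt
      (fun q => Wj u q * Wj u q) (t, x)) + g t) t := by
    intro t
    apply HasDerivAt.add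
    · exact (hasDerivAt_setIntegral D (fun q => Wj u q * Wj u q)
        ((hWj hu).mul (hWj hu)) t).const_mul (1/2)
    · exact intervalIntegral.integral_hasDerivAt_right
        (hgcont.intervalIntegrable 0 t) (hgcont.stronglyMeasurableAtFilter volume (nhds t))
        hgcont.continuousAt
  have hφcont : Continuous φ := by
    rw [continuous_iff_continuousAt]
    exact fun t => (hφderiv t).continuousAt
  have hφzero : ∀ t ∈ Set.Ioo (0:ℝ) T, HasDerivAt φ 0 t := by
    intro t ht
    have h1 := (energy_deriv hu hp D u₀ L h hsol t ht).const_mul (1/2)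
    have h2 := intervalIntegral.integral_hasDerivAt_right
      (hgcont.intervalIntegrable 0 t) (hgcont.stronglyMeasurableAtFilter volume (nhds t))
      hgcont.continuousAt
    have h3 := h1.add h2
    have : (1/2) * (-2 * g t) + g t = 0 := by ring
    rw [this] at h3
    exact h3
  -- φ is constant on [0, T]
  have hφconst : ∀ t ∈ Set.Icc (0:ℝ) T, φ t = φ 0 := by
    intro t ht
    rcases eq_or_lt_of_le ht.1 with h0 | h0
    · rw [← h0]
    · have key1 : ∀ a ∈ Set.Ioc (0:ℝ) t, φ t = φ a := by
        intro a ha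
        have := constant_of_has_deriv_right_zero (f := φ) (a := a) (b := t)
          hφcont.continuousOn (fun s hs => (hφzero s
            ⟨lt_of_lt_of_le ha.1 hs.1, lt_of_lt_of_le hs.2 ht.2⟩).hasDerivWithinAt)
        exact this t ⟨ha.2, le_refl t⟩
      have htend : Filter.Tendsto φ (nhdsWithin 0 (Set.Ioi 0)) (nhds (φ 0)) :=
        (hφcont.tendsto 0).mono_left nhdsWithin_le_nhds
      have heq : ∀ᶠ a in nhdsWithin (0:ℝ) (Set.Ioi 0), φ a = φ t := by
        filter_upwards [Ioc_mem_nhdsGT_of_mem (Set.mem_Ico.mpr ⟨le_refl 0, h0⟩)] with a ha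
        exact (key1 a ha).symm
      have htend2 : Filter.Tendsto φ (nhdsWithin 0 (Set.Ioi 0)) (nhds (φ t)) := by
        refine Filter.Tendsto.congr' ?_ tendsto_const_nhds
        exact heq.mono fun a ha => ha.symm
      exact tendsto_nhds_unique htend2 htend
  -- value at 0
  have hE0 : E 0 = ∫ x in D.Ω, vort u₀ x ^ 2 := by
    rw [← hEeq 0]
    apply setIntegral_congr_fun D.isOpen.measurableSet
    intro x hx
    simp only
    rw [vort_init hu D u₀ L h hsol x hx]
  have hφ0 : φ 0 = (1/2) * ∫ x in D.Ω, vort u₀ x ^ 2 := by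
    rw [hφ_def]
    simp only [intervalIntegral.integral_same, add_zero, hE0]
  -- Part 1
  have part1 : ∀ t ∈ Set.Icc (0:ℝ) T,
      (1/2) * (∫ x in D.Ω, vort (u t) x ^ 2)
        + (∫ s in (0:ℝ)..t, ∫ x in D.Ω, gradSq (vort (u s)) x)
      = (1/2) * ∫ x in D.Ω, vort u₀ x ^ 2 := by
    intro t ht
    have : (fun s => ∫ x in D.Ω, gradSq (vort (u s)) x) = g := funext hgeq
    rw [hEeq t, this, ← hφ0]
    exact hφconst t ht
  refine ⟨part1, ?_, ?_⟩
  · -- Part 2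
    intro t ht
    have h1 := part1 t ht
    have hGnonneg : 0 ≤ ∫ s in (0:ℝ)..t, ∫ x in D.Ω, gradSq (vort (u s)) x := by
      apply intervalIntegral.integral_nonneg ht.1
      intro s _
      rw [hgeq s]
      exact hgnonneg s
    have hle : (∫ x in D.Ω, vort (u t) x ^ 2) ≤ ∫ x in D.Ω, vort u₀ x ^ 2 := by linarith
    have hnn : 0 ≤ ∫ x in D.Ω, vort (u t) x ^ 2 :=
      setIntegral_nonneg D.isOpen.measurableSet fun x _ => sq_nonneg _
    rw [L2, L2]
    exact Real.rpow_le_rpow hnn hle (by norm_num)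
  · -- Part 3
    have h1 := part1 T ⟨le_of_lt hT, le_refl T⟩
    have hnn : 0 ≤ ∫ x in D.Ω, vort (u T) x ^ 2 :=
      setIntegral_nonneg D.isOpen.measurableSet fun x _ => sq_nonneg _
    have hA : 0 ≤ ∫ x in D.Ω, vort u₀ x ^ 2 :=
      setIntegral_nonneg D.isOpen.measurableSet fun x _ => sq_nonneg _
    have hGnonneg : 0 ≤ ∫ s in (0:ℝ)..T, ∫ x in D.Ω, gradSq (vort (u s)) x := by
      apply intervalIntegral.integral_nonneg (le_of_lt hT)
      intro s _
      rw [hgeq s]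
      exact hgnonneg s
    have hle : (∫ s in (0:ℝ)..T, ∫ x in D.Ω, gradSq (vort (u s)) x)
        ≤ (1/2) * ∫ x in D.Ω, vort u₀ x ^ 2 := by linarith
    calc (∫ t in (0:ℝ)..T, ∫ x in D.Ω, gradSq (vort (u t)) x) ^ (1/2 : ℝ)
        ≤ ((1/2) * ∫ x in D.Ω, vort u₀ x ^ 2) ^ (1/2 : ℝ) :=
          Real.rpow_le_rpow hGnonneg hle (by norm_num)
      _ = (1/2 : ℝ) ^ (1/2 : ℝ) * (∫ x in D.Ω, vort u₀ x ^ 2) ^ (1/2 : ℝ) :=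
          Real.mul_rpow (by norm_num) hA
      _ = (1 / Real.sqrt 2) * L2 D.Ω (vort u₀) := by
          rw [L2, ← Real.sqrt_eq_rpow]
          congr 1
          rw [show (1/2 : ℝ) = 2⁻¹ by norm_num, Real.sqrt_inv, one_div]
end Main

/-- energy identity for the vorticity and its consequences.
If `(u,p,h)` is a classical solution of the 2D Navier–Stokes system on `Ω × (0,T)` with
data `(u₀, L)`, `u₀` smooth, divergence free and tangent to `∂Ω`, and `ω₀ = curl u₀`, then
for every `t ∈ [0,T]`,
`(1/2)∫_Ω ω(t)² + ∫₀ᵗ∫_Ω |∇ω|² = (1/2)∫_Ω ω₀²`;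
in particular `‖ω(t)‖_{L²} ≤ ‖ω₀‖_{L²}` on `[0,T]` and
`(∫₀ᵀ ‖∇ω‖²_{L²})^{1/2} ≤ (1/√2)‖ω₀‖_{L²}`. -/
theorem vorticity_energy_identity
    (D : SmoothDomain2) (T : ℝ) (hT : 0 < T)
    (u₀ : Pt → Pt) (L : ℝ) (u : ℝ → Pt → Pt) (p : ℝ → Pt → ℝ) (h : ℝ → ℝ)
    (hu₀ : ContDiff ℝ (⊤ : ℕ∞) u₀)
    (hdiv₀ : ∀ x ∈ D.Ω, div2 u₀ x = 0)
    (hslip₀ : ∀ x ∈ frontier D.Ω, (∑ j, u₀ x j * D.n x j) = 0)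
    (hsol : IsNSSol D T u₀ L u p h) :
    (∀ t ∈ Set.Icc (0:ℝ) T,
      (1/2) * (∫ x in D.Ω, vort (u t) x ^ 2)
        + (∫ s in (0:ℝ)..t, ∫ x in D.Ω, gradSq (vort (u s)) x)
      = (1/2) * ∫ x in D.Ω, vort u₀ x ^ 2)
    ∧ (∀ t ∈ Set.Icc (0:ℝ) T, L2 D.Ω (vort (u t)) ≤ L2 D.Ω (vort u₀))
    ∧ (∫ t in (0:ℝ)..T, ∫ x in D.Ω, gradSq (vort (u t)) x) ^ (1/2 : ℝ)
        ≤ (1 / Real.sqrt 2) * L2 D.Ω (vort u₀) := vorticity_energy_identity' D T hT u₀ L u p h hu₀ hdiv₀ hslip₀ hsol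
end
end

section
/- Let C_P > 0 be a Poincaré constant of Ω, i.e. ‖f − (1/|Ω|)∫_Ω f dx‖_{L²(Ω)} ≤ C_P ‖∇f‖_{L²(Ω)} for all smooth f on Ω̄, and set λ₀ := 1/C_P². Then for every classical solution (u, p, h) of the 2D Navier–Stokes system on Ω×(0,T) with data (u₀, L) (with u₀ smooth, div u₀ = 0 in Ω, u₀·n = 0 on ∂Ω, ω₀ := curl u₀), the vorticity decays exponentially to its spatial average: for all t ∈ [0,T], ‖ω(·,t) − (1/|Ω|)∫_Ω ω(x,t) dx‖_{L²(Ω)} ≤ ‖ω₀ − (1/|Ω|)∫_Ω ω₀ dx‖_{L²(Ω)} · e^{−λ₀ t}. -/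
noncomputable section
open MeasureTheory Real

namespace VED

/-- directional derivative on `ℝ × Pt`. -/
def D (v : ℝ × Pt) (F : ℝ × Pt → ℝ) (q : ℝ × Pt) : ℝ := fderiv ℝ F q v

lemma D_smooth {F : ℝ × Pt → ℝ} (hF : ContDiff ℝ (⊤ : ℕ∞) F) (v : ℝ × Pt) :
    ContDiff ℝ (⊤ : ℕ∞) (D v F) :=
  (hF.fderiv_right (by simp)).clm_apply contDiff_const

lemma D_comm {F : ℝ × Pt → ℝ} (hF : ContDiff ℝ (⊤ : ℕ∞) F) (v w q : ℝ × Pt) :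
    D v (D w F) q = D w (D v F) q := by
  have hsym := (hF.contDiffAt (x := q)).isSymmSndFDerivAt (by
    rw [minSmoothness_of_isRCLikeNormedField]
    exact WithTop.coe_le_coe.mpr le_top)
  have key : ∀ a : ℝ × Pt, fderiv ℝ (D a F) q
      = (fderiv ℝ (fderiv ℝ F) q).flip a := by
    intro a
    have hd : DifferentiableAt ℝ (fderiv ℝ F) q :=
      ((hF.fderiv_right (m := (⊤ : ℕ∞)) (by simp)).differentiable (by simp)) q
    have : D a F = (fun L : (ℝ × Pt) →L[ℝ] ℝ => L a) ∘ (fderiv ℝ F) := rfl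
    rw [this]
    have h2 := (ContinuousLinearMap.apply ℝ ℝ a).hasFDerivAt.comp q hd.hasFDerivAt
    have h3 : (⇑((ContinuousLinearMap.apply ℝ ℝ) a) ∘ fderiv ℝ F) = ((fun L => L a) ∘ fderiv ℝ F : (ℝ × Pt) → ℝ) := rfl
    rw [← h3, h2.fderiv]
    rfl
  show fderiv ℝ (D w F) q v = fderiv ℝ (D v F) q w
  rw [key w, key v]
  simp only [ContinuousLinearMap.flip_apply]
  exact hsym v w

lemma smooth_dAt {F : ℝ × Pt → ℝ} (hF : ContDiff ℝ (⊤ : ℕ∞) F) (q : ℝ × Pt) :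
    DifferentiableAt ℝ F q := hF.differentiable (by simp) q

lemma pd_slice {F : ℝ × Pt → ℝ} (hF : ContDiff ℝ (⊤ : ℕ∞) F) (t : ℝ) (x : Pt) (j : Fin 2) :
    pd j (fun y => F (t, y)) x = D (0, EuclideanSpace.single j 1) F (t, x) := by
  have h1 : HasFDerivAt (fun y : Pt => F (t, y))
      ((fderiv ℝ F (t,x)).comp (ContinuousLinearMap.inr ℝ ℝ Pt)) x :=
    (smooth_dAt hF (t,x)).hasFDerivAt.comp x (hasFDerivAt_prodMk_right t x)
  rw [pd, h1.fderiv]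
  rfl

lemma deriv_slice {F : ℝ × Pt → ℝ} (hF : ContDiff ℝ (⊤ : ℕ∞) F) (t : ℝ) (x : Pt) :
    deriv (fun s => F (s, x)) t = D (1, 0) F (t, x) := by
  have h1 : HasFDerivAt (fun s : ℝ => F (s, x))
      ((fderiv ℝ F (t,x)).comp (ContinuousLinearMap.inl ℝ ℝ Pt)) t :=
    (smooth_dAt hF (t,x)).hasFDerivAt.comp t (hasFDerivAt_prodMk_left t x)
  rw [h1.hasDerivAt.deriv]
  rfl

variable {F G : ℝ × Pt → ℝ} {q : ℝ × Pt} {v : ℝ × Pt}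

lemma D_add (v) (hF : DifferentiableAt ℝ F q) (hG : DifferentiableAt ℝ G q) :
    D v (fun r => F r + G r) q = D v F q + D v G q := by
  simp [D, fderiv_fun_add hF hG]

lemma D_sub (v) (hF : DifferentiableAt ℝ F q) (hG : DifferentiableAt ℝ G q) :
    D v (fun r => F r - G r) q = D v F q - D v G q := by
  simp [D, fderiv_fun_sub hF hG]

lemma D_mul (v) (hF : DifferentiableAt ℝ F q) (hG : DifferentiableAt ℝ G q) :
    D v (fun r => F r * G r) q = D v F q * G q + F q * D v G q := by
  simp [D, fderiv_fun_mul hF hG]; ring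

lemma D_zero_of_locally_zero {s : Set (ℝ × Pt)} (hs : IsOpen s)
    (h0 : ∀ q ∈ s, F q = 0) (hq : q ∈ s) (v) : D v F q = 0 := by
  have he : F =ᶠ[nhds q] (fun _ => (0:ℝ)) :=
    Filter.eventuallyEq_of_mem (hs.mem_nhds hq) h0
  simp [D, he.fderiv_eq]


lemma D_sub_fun {F G : ℝ × Pt → ℝ} (v : ℝ × Pt) (hF : ContDiff ℝ (⊤ : ℕ∞) F) (hG : ContDiff ℝ (⊤ : ℕ∞) G) :
    D v (fun r => F r - G r) = fun r => D v F r - D v G r :=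
  funext fun q => D_sub v (smooth_dAt hF q) (smooth_dAt hG q)

lemma D_comm_fun {F : ℝ × Pt → ℝ} (hF : ContDiff ℝ (⊤ : ℕ∞) F) (v w : ℝ × Pt) :
    D v (D w F) = D w (D v F) := funext fun q => D_comm hF v w q

/-- component functions of the velocity as functions on space-time -/
def Ufun (u : ℝ → Pt → Pt) (i : Fin 2) : ℝ × Pt → ℝ := fun q => u q.1 q.2 i

def Pfun (p : ℝ → Pt → ℝ) : ℝ × Pt → ℝ := fun q => p q.1 q.2

def ee (j : Fin 2) : ℝ × Pt := ((0:ℝ), EuclideanSpace.single j 1)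

def et : ℝ × Pt := ((1:ℝ), (0:Pt))

/-- the vorticity as a function on space-time -/
def Wfun (u : ℝ → Pt → Pt) : ℝ × Pt → ℝ :=
  fun q => D (ee 0) (Ufun u 1) q - D (ee 1) (Ufun u 0) q

lemma Ufun_smooth {u : ℝ → Pt → Pt} (hu : ContDiff ℝ (⊤ : ℕ∞) (fun q : ℝ × Pt => u q.1 q.2))
    (i : Fin 2) : ContDiff ℝ (⊤ : ℕ∞) (Ufun u i) := by
  have := (EuclideanSpace.proj (𝕜 := ℝ) i).contDiff.comp hu
  exact this

lemma Wfun_smooth {u : ℝ → Pt → Pt} (hu : ContDiff ℝ (⊤ : ℕ∞) (fun q : ℝ × Pt => u q.1 q.2)) :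
    ContDiff ℝ (⊤ : ℕ∞) (Wfun u) :=
  (D_smooth (Ufun_smooth hu 1) _).sub (D_smooth (Ufun_smooth hu 0) _)

/-- the momentum equation residual -/
def Mfun (u : ℝ → Pt → Pt) (p : ℝ → Pt → ℝ) (i : Fin 2) : ℝ × Pt → ℝ := fun q =>
  D et (Ufun u i) q
    + (Ufun u 0 q * D (ee 0) (Ufun u i) q + Ufun u 1 q * D (ee 1) (Ufun u i) q)
    + D (ee i) (Pfun p) q
    - (D (ee 0) (D (ee 0) (Ufun u i)) q + D (ee 1) (D (ee 1) (Ufun u i)) q)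

lemma vorticity_equation {u : ℝ → Pt → Pt} {p : ℝ → Pt → ℝ}
    (hu : ContDiff ℝ (⊤ : ℕ∞) (fun q : ℝ × Pt => u q.1 q.2))
    (hp : ContDiff ℝ (⊤ : ℕ∞) (fun q : ℝ × Pt => p q.1 q.2))
    {S : Set (ℝ × Pt)} (hS : IsOpen S)
    (hM : ∀ i : Fin 2, ∀ q ∈ S, Mfun u p i q = 0)
    (hdiv : ∀ q ∈ S, D (ee 0) (Ufun u 0) q + D (ee 1) (Ufun u 1) q = 0)
    {q : ℝ × Pt} (hq : q ∈ S) :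
    D et (Wfun u) q =
      (D (ee 0) (D (ee 0) (Wfun u)) q + D (ee 1) (D (ee 1) (Wfun u)) q)
      - (Ufun u 0 q * D (ee 0) (Wfun u) q + Ufun u 1 q * D (ee 1) (Wfun u) q) := by
  have hU : ∀ i, ContDiff ℝ (⊤ : ℕ∞) (Ufun u i) := Ufun_smooth hu
  have hP : ContDiff ℝ (⊤ : ℕ∞) (Pfun p) := hp
  have dd : ∀ (G : ℝ × Pt → ℝ), ContDiff ℝ (⊤ : ℕ∞) G → ∀ r, DifferentiableAt ℝ G r :=
    fun G hG r => smooth_dAt hG r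
  -- expansion of derivatives of the momentum residual
  have expand : ∀ (v : ℝ × Pt) (i : Fin 2), D v (Mfun u p i) q =
      D v (D et (Ufun u i)) q
      + (D v (Ufun u 0) q * D (ee 0) (Ufun u i) q
          + Ufun u 0 q * D v (D (ee 0) (Ufun u i)) q
          + (D v (Ufun u 1) q * D (ee 1) (Ufun u i) q
          + Ufun u 1 q * D v (D (ee 1) (Ufun u i)) q))
      + D v (D (ee i) (Pfun p)) q
      - (D v (D (ee 0) (D (ee 0) (Ufun u i))) q
          + D v (D (ee 1) (D (ee 1) (Ufun u i))) q) := by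
    intro v i
    have h1 : ContDiff ℝ (⊤ : ℕ∞) (fun r => D et (Ufun u i) r) := D_smooth (hU i) _
    have h2 : ContDiff ℝ (⊤ : ℕ∞) (fun r =>
        Ufun u 0 r * D (ee 0) (Ufun u i) r + Ufun u 1 r * D (ee 1) (Ufun u i) r) :=
      ((hU 0).mul (D_smooth (hU i) _)).add ((hU 1).mul (D_smooth (hU i) _))
    have h3 : ContDiff ℝ (⊤ : ℕ∞) (fun r => D (ee i) (Pfun p) r) := D_smooth hP _
    have h4 : ContDiff ℝ (⊤ : ℕ∞) (fun r =>
        D (ee 0) (D (ee 0) (Ufun u i)) r + D (ee 1) (D (ee 1) (Ufun u i)) r) :=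
      (D_smooth (D_smooth (hU i) _) _).add (D_smooth (D_smooth (hU i) _) _)
    unfold Mfun
    rw [D_sub v (((h1.add h2).add h3).differentiable (by simp) q) (h4.differentiable (by simp) q),
       D_add v ((h1.add h2).differentiable (by simp) q) (h3.differentiable (by simp) q),
       D_add v (h1.differentiable (by simp) q) (h2.differentiable (by simp) q),
       D_add v (((hU 0).mul (D_smooth (hU i) _)).differentiable (by simp) q)
         (((hU 1).mul (D_smooth (hU i) _)).differentiable (by simp) q),
       D_mul v (dd _ (hU 0) q) (dd _ (D_smooth (hU i) _) q),
       D_mul v (dd _ (hU 1) q) (dd _ (D_smooth (hU i) _) q),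
       D_add v (dd _ (D_smooth (D_smooth (hU i) _) _) q)
         (dd _ (D_smooth (D_smooth (hU i) _) _) q)]
  have E10 := expand (ee 0) 1
  have E01 := expand (ee 1) 0
  have Z10 : D (ee 0) (Mfun u p 1) q = 0 := D_zero_of_locally_zero hS (hM 1) hq _
  have Z01 : D (ee 1) (Mfun u p 0) q = 0 := D_zero_of_locally_zero hS (hM 0) hq _
  rw [Z10] at E10; rw [Z01] at E01
  have hdv := hdiv q hq
  have s1 : D (ee 0) (D et (Ufun u 1)) = D et (D (ee 0) (Ufun u 1)) := D_comm_fun (hU 1) _ _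
  have s2 : D (ee 1) (D et (Ufun u 0)) = D et (D (ee 1) (Ufun u 0)) := D_comm_fun (hU 0) _ _
  have s3 : D (ee 0) (D (ee 1) (Pfun p)) = D (ee 1) (D (ee 0) (Pfun p)) := D_comm_fun hP _ _
  have s4 : D (ee 1) (D (ee 0) (Ufun u 0)) = D (ee 0) (D (ee 1) (Ufun u 0)) := D_comm_fun (hU 0) _ _
  have s5 : D (ee 0) (D (ee 1) (Ufun u 1)) = D (ee 1) (D (ee 0) (Ufun u 1)) := D_comm_fun (hU 1) _ _
  have t1 : D (ee 0) (D (ee 1) (D (ee 1) (Ufun u 1)))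
      = D (ee 1) (D (ee 1) (D (ee 0) (Ufun u 1))) := by
    rw [D_comm_fun (D_smooth (hU 1) (ee 1)) (ee 0) (ee 1), s5]
  have t2 : D (ee 1) (D (ee 0) (D (ee 0) (Ufun u 0)))
      = D (ee 0) (D (ee 0) (D (ee 1) (Ufun u 0))) := by
    rw [D_comm_fun (D_smooth (hU 0) (ee 0)) (ee 1) (ee 0), s4]
  rw [s1, s3, t1] at E10
  rw [s2, s4, t2] at E01
  rw [s5] at E10
  -- expand derivatives of W in the goal
  have wt : D et (Wfun u) q
      = D et (D (ee 0) (Ufun u 1)) q - D et (D (ee 1) (Ufun u 0)) q := by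
    unfold Wfun
    exact D_sub et (dd _ (D_smooth (hU 1) _) q) (dd _ (D_smooth (hU 0) _) q)
  have w0 : D (ee 0) (Wfun u) = fun r =>
      D (ee 0) (D (ee 0) (Ufun u 1)) r - D (ee 0) (D (ee 1) (Ufun u 0)) r := by
    unfold Wfun
    exact D_sub_fun _ (D_smooth (hU 1) _) (D_smooth (hU 0) _)
  have w1 : D (ee 1) (Wfun u) = fun r =>
      D (ee 1) (D (ee 0) (Ufun u 1)) r - D (ee 1) (D (ee 1) (Ufun u 0)) r := by
    unfold Wfun
    exact D_sub_fun _ (D_smooth (hU 1) _) (D_smooth (hU 0) _)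
  have w0q : D (ee 0) (Wfun u) q
      = D (ee 0) (D (ee 0) (Ufun u 1)) q - D (ee 0) (D (ee 1) (Ufun u 0)) q := by rw [w0]
  have w1q : D (ee 1) (Wfun u) q
      = D (ee 1) (D (ee 0) (Ufun u 1)) q - D (ee 1) (D (ee 1) (Ufun u 0)) q := by rw [w1]
  have w00 : D (ee 0) (D (ee 0) (Wfun u)) q
      = D (ee 0) (D (ee 0) (D (ee 0) (Ufun u 1))) q
        - D (ee 0) (D (ee 0) (D (ee 1) (Ufun u 0))) q := by
    rw [w0]
    exact D_sub _ (dd _ (D_smooth (D_smooth (hU 1) _) _) q)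
      (dd _ (D_smooth (D_smooth (hU 0) _) _) q)
  have w11 : D (ee 1) (D (ee 1) (Wfun u)) q
      = D (ee 1) (D (ee 1) (D (ee 0) (Ufun u 1))) q
        - D (ee 1) (D (ee 1) (D (ee 1) (Ufun u 0))) q := by
    rw [w1]
    exact D_sub _ (dd _ (D_smooth (D_smooth (hU 1) _) _) q)
      (dd _ (D_smooth (D_smooth (hU 0) _) _) q)
  rw [wt, w00, w11, w0q, w1q]
  linear_combination E01 - E10
    - (D (ee 0) (Ufun u 1) q - D (ee 1) (Ufun u 0) q) * hdv
end VED

namespace VED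

lemma slice_smooth {F : ℝ × Pt → ℝ} (hF : ContDiff ℝ (⊤ : ℕ∞) F) (t : ℝ) :
    ContDiff ℝ (⊤ : ℕ∞) (fun x : Pt => F (t, x)) := hF.comp (contDiff_const.prodMk contDiff_id)

lemma pd_mul {f g : Pt → ℝ} {x : Pt} (hf : DifferentiableAt ℝ f x)
    (hg : DifferentiableAt ℝ g x) (j : Fin 2) :
    pd j (fun y => f y * g y) x = pd j f x * g x + f x * pd j g x := by
  simp [pd, fderiv_fun_mul hf hg]; ring

lemma hasDerivAt_slice {F : ℝ × Pt → ℝ} (hF : ContDiff ℝ (⊤ : ℕ∞) F) (t : ℝ) (x : Pt) :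
    HasDerivAt (fun s => F (s, x)) (D et F (t, x)) t := by
  exact ((smooth_dAt hF (t,x)).hasFDerivAt.comp t (hasFDerivAt_prodMk_left t x)).hasDerivAt

lemma integrableOn_of_continuous {Ω : Set Pt} (hmeas : MeasurableSet Ω)
    (hb : Bornology.IsBounded Ω) {g : Pt → ℝ} (hg : Continuous g) :
    IntegrableOn g Ω volume := by
  obtain ⟨C, hC⟩ := hb.isCompact_closure.exists_bound_of_continuousOn hg.continuousOn
  refine Integrable.mono' (g := fun _ => C) ?_ hg.aestronglyMeasurable.restrict ?_
  · exact integrableOn_const hb.measure_lt_top.ne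
  · exact (ae_restrict_mem hmeas).mono fun x hx => hC x (subset_closure hx)

lemma hasDerivAt_setIntegral_param {Ω : Set Pt} (hmeas : MeasurableSet Ω)
    (hb : Bornology.IsBounded Ω) {Φ Ψ : ℝ × Pt → ℝ}
    (hΦ : Continuous Φ) (hΨ : Continuous Ψ)
    (hd : ∀ s x, HasDerivAt (fun r => Φ (r, x)) (Ψ (s, x)) s) (t₀ : ℝ) :
    HasDerivAt (fun s => ∫ x in Ω, Φ (s, x)) (∫ x in Ω, Ψ (t₀, x)) t₀ := by
  have K : IsCompact ((Set.Icc (t₀ - 1) (t₀ + 1)) ×ˢ closure Ω) :=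
    isCompact_Icc.prod hb.isCompact_closure
  obtain ⟨C, hC⟩ := K.exists_bound_of_continuousOn hΨ.continuousOn
  refine (hasDerivAt_integral_of_dominated_loc_of_deriv_le
    (F := fun s x => Φ (s, x)) (F' := fun s x => Ψ (s, x)) (bound := fun _ => C)
    (Metric.ball_mem_nhds t₀ one_pos) ?_ ?_ ?_ ?_ ?_ ?_).2
  · exact Filter.Eventually.of_forall fun s =>
      (hΦ.comp (continuous_const.prodMk continuous_id)).aestronglyMeasurable.restrict
  · exact integrableOn_of_continuous hmeas hb (hΦ.comp (continuous_const.prodMk continuous_id))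
  · exact (hΨ.comp (continuous_const.prodMk continuous_id)).aestronglyMeasurable.restrict
  · refine (ae_restrict_mem hmeas).mono fun x hx s hs => ?_
    have h := abs_lt.mp (by simpa [Real.dist_eq] using Metric.mem_ball.mp hs)
    exact hC (s, x) ⟨⟨by linarith [h.1], by linarith [h.2]⟩, subset_closure hx⟩
  · exact integrableOn_const hb.measure_lt_top.ne
  · exact Filter.Eventually.of_forall fun x s _ => hd s x

lemma continuous_setIntegral_param {Ω : Set Pt} (hmeas : MeasurableSet Ω)
    (hb : Bornology.IsBounded Ω) {Φ : ℝ × Pt → ℝ} (hΦ : Continuous Φ) :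
    Continuous fun s => ∫ x in Ω, Φ (s, x) := by
  rw [continuous_iff_continuousAt]
  intro t₀
  have K : IsCompact ((Set.Icc (t₀ - 1) (t₀ + 1)) ×ˢ closure Ω) :=
    isCompact_Icc.prod hb.isCompact_closure
  obtain ⟨C, hC⟩ := K.exists_bound_of_continuousOn hΦ.continuousOn
  refine continuousAt_of_dominated (bound := fun _ => C) ?_ ?_ ?_ ?_
  · exact Filter.Eventually.of_forall fun s =>
      (hΦ.comp (continuous_const.prodMk continuous_id)).aestronglyMeasurable.restrict
  · filter_upwards [Icc_mem_nhds (by linarith : t₀ - 1 < t₀) (by linarith : t₀ < t₀ + 1)]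
      with s hs
    exact (ae_restrict_mem hmeas).mono fun x hx =>
      hC (s, x) ⟨hs, subset_closure hx⟩
  · exact integrableOn_const hb.measure_lt_top.ne
  · exact Filter.Eventually.of_forall fun x =>
      (hΦ.comp (continuous_id.prodMk continuous_const)).continuousAt

/-- building a planar vector field from two scalar components -/
def mk2 (a b : Pt → ℝ) : Pt → Pt := fun x => (WithLp.equiv 2 (Fin 2 → ℝ)).symm ![a x, b x]

lemma mk2_smooth {a b : Pt → ℝ} (ha : ContDiff ℝ (⊤ : ℕ∞) a) (hb : ContDiff ℝ (⊤ : ℕ∞) b) :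
    ContDiff ℝ (⊤ : ℕ∞) (mk2 a b) := by
  rw [contDiff_euclidean]
  intro i
  fin_cases i
  · exact ha
  · exact hb

lemma div2_mk2 (a b : Pt → ℝ) (x : Pt) : div2 (mk2 a b) x = pd 0 a x + pd 1 b x := rfl

lemma sum_mk2 (a b : Pt → ℝ) (n : Pt → Pt) (x : Pt) :
    (∑ j, mk2 a b x j * n x j) = a x * n x 0 + b x * n x 1 := by
  rw [Fin.sum_univ_two]; rfl

lemma vort_eq {u : ℝ → Pt → Pt} (hu : ContDiff ℝ (⊤ : ℕ∞) fun q : ℝ × Pt => u q.1 q.2)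
    (t : ℝ) (x : Pt) : vort (u t) x = Wfun u (t, x) := by
  rw [vort, show (fun y => u t y 1) = (fun y => Ufun u 1 (t, y)) from rfl,
    show (fun y => u t y 0) = (fun y => Ufun u 0 (t, y)) from rfl,
    pd_slice (Ufun_smooth hu 1) t x 0, pd_slice (Ufun_smooth hu 0) t x 1]
  rfl

lemma div2_eq {u : ℝ → Pt → Pt} (hu : ContDiff ℝ (⊤ : ℕ∞) fun q : ℝ × Pt => u q.1 q.2)
    (t : ℝ) (x : Pt) :
    div2 (u t) x = D (ee 0) (Ufun u 0) (t, x) + D (ee 1) (Ufun u 1) (t, x) := by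
  rw [div2, show (fun y => u t y 0) = (fun y => Ufun u 0 (t, y)) from rfl,
    show (fun y => u t y 1) = (fun y => Ufun u 1 (t, y)) from rfl,
    pd_slice (Ufun_smooth hu 0) t x 0, pd_slice (Ufun_smooth hu 1) t x 1]
  rfl

lemma Mfun_vanish {u : ℝ → Pt → Pt} {p : ℝ → Pt → ℝ}
    (hu : ContDiff ℝ (⊤ : ℕ∞) fun q : ℝ × Pt => u q.1 q.2)
    (hp : ContDiff ℝ (⊤ : ℕ∞) fun q : ℝ × Pt => p q.1 q.2) {T : ℝ} {Ω : Set Pt}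
    (hmom : ∀ t ∈ Set.Ioo (0:ℝ) T, ∀ x ∈ Ω, ∀ i : Fin 2,
      deriv (fun s => u s x i) t + conv (u t) x i + pd i (p t) x
        - (∑ j, pd j (fun y => pd j (fun z => u t z i) y) x) = 0) :
    ∀ i : Fin 2, ∀ q ∈ (Set.Ioo (0:ℝ) T) ×ˢ Ω, Mfun u p i q = 0 := by
  rintro i ⟨t, x⟩ ⟨ht, hx⟩
  have H := hmom t ht x hx i
  rw [conv, Fin.sum_univ_two, Fin.sum_univ_two] at H
  rw [show (fun s => u s x i) = (fun s => Ufun u i (s, x)) from rfl,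
    deriv_slice (Ufun_smooth hu i)] at H
  rw [show (fun y => u t y i) = (fun y => Ufun u i (t, y)) from rfl] at H
  have lap : ∀ j : Fin 2, pd j (fun y => pd j (fun z => Ufun u i (t, z)) y) x
      = D (ee j) (D (ee j) (Ufun u i)) (t, x) := by
    intro j
    have h1 : (fun y => pd j (fun z => Ufun u i (t, z)) y)
        = fun y => D (ee j) (Ufun u i) (t, y) := by
      funext y; exact pd_slice (Ufun_smooth hu i) t y j
    rw [h1, pd_slice (D_smooth (Ufun_smooth hu i) (ee j)) t x j]
    rfl
  rw [lap 0, lap 1] at H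
  rw [pd_slice (Ufun_smooth hu i) t x 0, pd_slice (Ufun_smooth hu i) t x 1] at H
  have hP : ContDiff ℝ (⊤ : ℕ∞) (Pfun p) := hp
  rw [show (p t) = (fun y => Pfun p (t, y)) from rfl, pd_slice hP t x i] at H
  exact H

end VED


namespace VED

lemma divthm' (D : SmoothDomain2) {A B : Pt → ℝ} (hA : ContDiff ℝ (⊤ : ℕ∞) A) (hB : ContDiff ℝ (⊤ : ℕ∞) B) :
    (∫ x in D.Ω, (pd 0 A x + pd 1 B x))
      = ∫ x in frontier D.Ω, (A x * D.n x 0 + B x * D.n x 1) ∂D.σ := by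
  have h := D.divergence_thm (mk2 A B) (mk2_smooth hA hB)
  simpa only [div2_mk2, sum_mk2] using h

lemma divthm_zero (D : SmoothDomain2) {A B : Pt → ℝ} (hA : ContDiff ℝ (⊤ : ℕ∞) A)
    (hB : ContDiff ℝ (⊤ : ℕ∞) B)
    (hbdry : ∀ x ∈ frontier D.Ω, A x * D.n x 0 + B x * D.n x 1 = 0) :
    (∫ x in D.Ω, (pd 0 A x + pd 1 B x)) = 0 := by
  have heq : Set.EqOn (fun x => A x * D.n x 0 + B x * D.n x 1) (fun _ => (0:ℝ))
      (frontier D.Ω) := fun x hx => hbdry x hx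
  rw [divthm' D hA hB, setIntegral_congr_fun isClosed_frontier.measurableSet heq,
    integral_zero]

end VED

/-- exponential decay of the vorticity to its spatial average.
If `C_P > 0` is a Poincaré constant of `Ω` and `λ₀ = 1/C_P²`, then for every
classical solution of the 2D Navier–Stokes system and every `t ∈ [0,T]`,
`‖ω(·,t) − (1/|Ω|)∫_Ω ω(·,t)‖_{L²} ≤ ‖ω₀ − (1/|Ω|)∫_Ω ω₀‖_{L²} · e^{−λ₀ t}`. -/
theorem vorticity_exponential_decay
    (D : SmoothDomain2) (C_P : ℝ) (hCP : 0 < C_P)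
    (hPoincare : ∀ f : Pt → ℝ, ContDiff ℝ (⊤ : ℕ∞) f →
      L2 D.Ω (fun x => f x - (1 / (volume D.Ω).toReal) * ∫ y in D.Ω, f y)
        ≤ C_P * (∫ x in D.Ω, gradSq f x) ^ (1/2 : ℝ))
    (T : ℝ) (hT : 0 < T)
    (u₀ : Pt → Pt) (L : ℝ) (u : ℝ → Pt → Pt) (p : ℝ → Pt → ℝ) (h : ℝ → ℝ)
    (hu₀ : ContDiff ℝ (⊤ : ℕ∞) u₀)
    (hdiv₀ : ∀ x ∈ D.Ω, div2 u₀ x = 0)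
    (hslip₀ : ∀ x ∈ frontier D.Ω, (∑ j, u₀ x j * D.n x j) = 0)
    (hsol : IsNSSol D T u₀ L u p h) :
    ∀ t ∈ Set.Icc (0:ℝ) T,
      L2 D.Ω (fun x => vort (u t) x
          - (1 / (volume D.Ω).toReal) * ∫ y in D.Ω, vort (u t) y)
        ≤ L2 D.Ω (fun x => vort u₀ x
            - (1 / (volume D.Ω).toReal) * ∫ y in D.Ω, vort u₀ y)
          * Real.exp (-(1 / C_P ^ 2) * t) := by
  intro t htT
  obtain ⟨ht0, htT'⟩ := htT
  have hu := hsol.smooth_u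
  have hΩmeas : MeasurableSet D.Ω := D.isOpen.measurableSet
  have hbd := D.bounded
  have hW : ContDiff ℝ (⊤ : ℕ∞) (VED.Wfun u) := VED.Wfun_smooth hu
  set W := VED.Wfun u with hWdef
  have hvolpos : 0 < (volume D.Ω).toReal :=
    ENNReal.toReal_pos (D.isOpen.measure_pos volume D.nonempty).ne' hbd.measure_lt_top.ne
  set vol := (volume D.Ω).toReal with hvoldef
  set lam := (1 / C_P ^ 2 : ℝ) with hlamdef
  have hlampos : 0 < lam := by
    rw [hlamdef]; positivity
  -- integrability helper
  have intg : ∀ g : Pt → ℝ, Continuous g → IntegrableOn g D.Ω volume :=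
    fun g hg => VED.integrableOn_of_continuous hΩmeas hbd hg
  have contW : Continuous W := hW.continuous
  have contDW : ∀ v, Continuous (VED.D v W) := fun v => (VED.D_smooth hW v).continuous
  -- the three energy functionals
  set Ifn : ℝ → ℝ := fun s => ∫ x in D.Ω, W (s, x) with hIdef
  set Gfn : ℝ → ℝ := fun s => ∫ x in D.Ω, W (s, x) ^ 2 with hGdef
  set Jfn : ℝ → ℝ := fun s => ∫ x in D.Ω,
    (VED.D (VED.ee 0) W (s, x) ^ 2 + VED.D (VED.ee 1) W (s, x) ^ 2) with hJdef
  set Efn : ℝ → ℝ := fun s => ∫ x in D.Ω, (W (s, x) - (1 / vol) * Ifn s) ^ 2 with hEdef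
  have hEnonneg : ∀ s, 0 ≤ Efn s := fun s =>
    integral_nonneg fun x => sq_nonneg _
  have hJnonneg : ∀ s, 0 ≤ Jfn s := fun s =>
    integral_nonneg fun x => by positivity
  -- the vorticity equation
  have hSopen : IsOpen ((Set.Ioo (0:ℝ) T) ×ˢ D.Ω) := isOpen_Ioo.prod D.isOpen
  have hMvan := VED.Mfun_vanish hu hsol.smooth_p hsol.momentum
  have hdivD : ∀ q ∈ (Set.Ioo (0:ℝ) T) ×ˢ D.Ω,
      VED.D (VED.ee 0) (VED.Ufun u 0) q + VED.D (VED.ee 1) (VED.Ufun u 1) q = 0 := by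
    rintro ⟨s, x⟩ ⟨hs, hx⟩
    have hdf := hsol.divFree s hs x hx
    rwa [VED.div2_eq hu] at hdf
  have hveq : ∀ s ∈ Set.Ioo (0:ℝ) T, ∀ x ∈ D.Ω,
      VED.D VED.et W (s, x)
        = (VED.D (VED.ee 0) (VED.D (VED.ee 0) W) (s, x)
            + VED.D (VED.ee 1) (VED.D (VED.ee 1) W) (s, x))
          - (VED.Ufun u 0 (s, x) * VED.D (VED.ee 0) W (s, x)
            + VED.Ufun u 1 (s, x) * VED.D (VED.ee 1) W (s, x)) :=
    fun s hs x hx =>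
      VED.vorticity_equation hu hsol.smooth_p hSopen hMvan hdivD ⟨hs, hx⟩
  -- derivatives of the functionals
  have hI' : ∀ s, HasDerivAt Ifn (∫ x in D.Ω, VED.D VED.et W (s, x)) s := fun s =>
    VED.hasDerivAt_setIntegral_param hΩmeas hbd contW (contDW VED.et)
      (fun r x => VED.hasDerivAt_slice hW r x) s
  have hG' : ∀ s, HasDerivAt Gfn
      (∫ x in D.Ω, 2 * W (s, x) * VED.D VED.et W (s, x)) s := fun s => by
    refine VED.hasDerivAt_setIntegral_param hΩmeas hbd
      (Φ := fun q => W q ^ 2) (Ψ := fun q => 2 * W q * VED.D VED.et W q)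
      (contW.pow 2) ((continuous_const.mul contW).mul (contDW VED.et)) ?_ s
    intro r x
    have h := (VED.hasDerivAt_slice hW r x).fun_pow 2
    refine h.congr_deriv ?_
    push_cast
    ring
  -- the average is constant in time
  have hIconst : ∀ s ∈ Set.Ioo (0:ℝ) T, Ifn s = L * vol := by
    intro s hs
    have hva := hsol.vortAvg s hs
    have hIv : (∫ x in D.Ω, vort (u s) x) = Ifn s := by
      simp only [hIdef, VED.vort_eq hu, hWdef]
    rw [hIv] at hva
    have hvne : vol ≠ 0 := ne_of_gt hvolpos
    rw [← hvoldef] at hva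
    field_simp at hva
    linarith [hva]
  have hI'0 : ∀ s ∈ Set.Ioo (0:ℝ) T, (∫ x in D.Ω, VED.D VED.et W (s, x)) = 0 := by
    intro s hs
    have hloc : Ifn =ᶠ[nhds s] fun _ => L * vol :=
      Filter.eventuallyEq_of_mem (isOpen_Ioo.mem_nhds hs) hIconst
    have hconst : HasDerivAt Ifn 0 s :=
      (hasDerivAt_const s (L * vol)).congr_of_eventuallyEq hloc
    exact (hI' s).unique hconst
  -- slice smoothness / pointwise translation facts
  have sW : ∀ s, ContDiff ℝ (⊤ : ℕ∞) (fun x : Pt => W (s, x)) := fun s => VED.slice_smooth hW s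
  have sDW : ∀ s (j : Fin 2), ContDiff ℝ (⊤ : ℕ∞) (fun x : Pt => VED.D (VED.ee j) W (s, x)) :=
    fun s j => VED.slice_smooth (VED.D_smooth hW (VED.ee j)) s
  have sU : ∀ s (i : Fin 2), ContDiff ℝ (⊤ : ℕ∞) (fun x : Pt => u s x i) := fun s i =>
    VED.slice_smooth (VED.Ufun_smooth hu i) s
  have hpdW : ∀ s (x : Pt) (j : Fin 2),
      pd j (fun y => W (s, y)) x = VED.D (VED.ee j) W (s, x) := by
    intro s x j
    rw [VED.pd_slice hW s x j]; rfl
  have hpdDW : ∀ s (j k : Fin 2) (x : Pt),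
      pd k (fun y => VED.D (VED.ee j) W (s, y)) x
        = VED.D (VED.ee k) (VED.D (VED.ee j) W) (s, x) := by
    intro s j k x
    rw [VED.pd_slice (VED.D_smooth hW (VED.ee j)) s x k]; rfl
  have hpdU : ∀ s (i j : Fin 2) (x : Pt),
      pd j (fun y => u s y i) x = VED.D (VED.ee j) (VED.Ufun u i) (s, x) := by
    intro s i j x
    rw [show (fun y => u s y i) = (fun y => VED.Ufun u i (s, y)) from rfl,
      VED.pd_slice (VED.Ufun_smooth hu i) s x j]
    rfl
  -- the four divergence-theorem identities, for s ∈ (0,T)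
  have idA : ∀ s ∈ Set.Ioo (0:ℝ) T,
      (∫ x in D.Ω, (u s x 0 * VED.D (VED.ee 0) W (s, x)
        + u s x 1 * VED.D (VED.ee 1) W (s, x))) = 0 := by
    intro s hs
    have hcongr : Set.EqOn
        (fun x => u s x 0 * VED.D (VED.ee 0) W (s, x)
          + u s x 1 * VED.D (VED.ee 1) W (s, x))
        (fun x => pd 0 (fun y => u s y 0 * W (s, y)) x
          + pd 1 (fun y => u s y 1 * W (s, y)) x) D.Ω := by
      intro x hx
      have hdf := hsol.divFree s hs x hx
      rw [VED.div2_eq hu] at hdf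
      simp only
      rw [VED.pd_mul ((sU s 0).differentiable (by simp) x) ((sW s).differentiable (by simp) x) 0,
        VED.pd_mul ((sU s 1).differentiable (by simp) x) ((sW s).differentiable (by simp) x) 1,
        hpdU s 0 0 x, hpdU s 1 1 x, hpdW s x 0, hpdW s x 1]
      linear_combination (-(W (s, x))) * hdf
    rw [setIntegral_congr_fun hΩmeas hcongr]
    refine VED.divthm_zero D ((sU s 0).mul (sW s)) ((sU s 1).mul (sW s)) ?_
    intro x hx
    have hslip := hsol.slip s hs x hx
    rw [Fin.sum_univ_two] at hslip
    linear_combination (W (s, x)) * hslip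
  have idB : ∀ s ∈ Set.Ioo (0:ℝ) T,
      (∫ x in D.Ω, (u s x 0 * (W (s, x) * VED.D (VED.ee 0) W (s, x))
        + u s x 1 * (W (s, x) * VED.D (VED.ee 1) W (s, x)))) = 0 := by
    intro s hs
    have hcongr : Set.EqOn
        (fun x => (2:ℝ) * (u s x 0 * (W (s, x) * VED.D (VED.ee 0) W (s, x))
          + u s x 1 * (W (s, x) * VED.D (VED.ee 1) W (s, x))))
        (fun x => pd 0 (fun y => u s y 0 * (W (s, y) * W (s, y))) x
          + pd 1 (fun y => u s y 1 * (W (s, y) * W (s, y))) x) D.Ω := by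
      intro x hx
      have hdf := hsol.divFree s hs x hx
      rw [VED.div2_eq hu] at hdf
      simp only
      rw [VED.pd_mul ((sU s 0).differentiable (by simp) x)
          (((sW s).mul (sW s)).differentiable (by simp) x) 0,
        VED.pd_mul ((sU s 1).differentiable (by simp) x)
          (((sW s).mul (sW s)).differentiable (by simp) x) 1,
        VED.pd_mul ((sW s).differentiable (by simp) x) ((sW s).differentiable (by simp) x) 0,
        VED.pd_mul ((sW s).differentiable (by simp) x) ((sW s).differentiable (by simp) x) 1,
        hpdU s 0 0 x, hpdU s 1 1 x, hpdW s x 0, hpdW s x 1]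
      linear_combination (-(W (s, x) * W (s, x))) * hdf
    have h2 : (∫ x in D.Ω, (2:ℝ) * (u s x 0 * (W (s, x) * VED.D (VED.ee 0) W (s, x))
        + u s x 1 * (W (s, x) * VED.D (VED.ee 1) W (s, x)))) = 0 := by
      rw [setIntegral_congr_fun hΩmeas hcongr]
      refine VED.divthm_zero D ((sU s 0).mul ((sW s).mul (sW s)))
        ((sU s 1).mul ((sW s).mul (sW s))) ?_
      intro x hx
      have hslip := hsol.slip s hs x hx
      rw [Fin.sum_univ_two] at hslip
      linear_combination (W (s, x) * W (s, x)) * hslip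
    rw [integral_const_mul] at h2
    linarith [h2]
  have idC : ∀ s : ℝ,
      (∫ x in D.Ω, (VED.D (VED.ee 0) (VED.D (VED.ee 0) W) (s, x)
        + VED.D (VED.ee 1) (VED.D (VED.ee 1) W) (s, x)))
      = ∫ x in frontier D.Ω, (VED.D (VED.ee 0) W (s, x) * D.n x 0
          + VED.D (VED.ee 1) W (s, x) * D.n x 1) ∂D.σ := by
    intro s
    have h := VED.divthm' D (sDW s 0) (sDW s 1)
    rw [← h]
    apply setIntegral_congr_fun hΩmeas
    intro x _
    simp only
    rw [hpdDW s 0 0 x, hpdDW s 1 1 x]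
  have idE : ∀ s ∈ Set.Ioo (0:ℝ) T,
      (∫ x in D.Ω, (VED.D (VED.ee 0) (VED.D (VED.ee 0) W) (s, x)
        + VED.D (VED.ee 1) (VED.D (VED.ee 1) W) (s, x))) = 0 := by
    intro s hs
    have hcongr : Set.EqOn
        (fun x => VED.D (VED.ee 0) (VED.D (VED.ee 0) W) (s, x)
          + VED.D (VED.ee 1) (VED.D (VED.ee 1) W) (s, x))
        (fun x => VED.D VED.et W (s, x)
          + (u s x 0 * VED.D (VED.ee 0) W (s, x)
            + u s x 1 * VED.D (VED.ee 1) W (s, x))) D.Ω := by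
      intro x hx
      have := hveq s hs x hx
      simp only
      rw [show VED.Ufun u 0 (s, x) = u s x 0 from rfl,
        show VED.Ufun u 1 (s, x) = u s x 1 from rfl] at this
      linarith [this]
    rw [setIntegral_congr_fun hΩmeas hcongr, integral_add]
    · rw [hI'0 s hs, idA s hs, add_zero]
    · exact intg _ ((contDW VED.et).comp (continuous_const.prodMk continuous_id))
    · refine intg _ ?_
      exact (((sU s 0).continuous).mul ((contDW (VED.ee 0)).comp
          (continuous_const.prodMk continuous_id))).add
        (((sU s 1).continuous).mul ((contDW (VED.ee 1)).comp
          (continuous_const.prodMk continuous_id)))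
  have idF : ∀ s ∈ Set.Ioo (0:ℝ) T,
      (∫ x in D.Ω, (W (s, x) * VED.D (VED.ee 0) (VED.D (VED.ee 0) W) (s, x)
        + W (s, x) * VED.D (VED.ee 1) (VED.D (VED.ee 1) W) (s, x))) = - Jfn s := by
    intro s hs
    have hD := VED.divthm' D ((sW s).mul (sDW s 0)) ((sW s).mul (sDW s 1))
    have hL : (∫ x in D.Ω, (pd 0 (fun y => W (s, y) * VED.D (VED.ee 0) W (s, y)) x
        + pd 1 (fun y => W (s, y) * VED.D (VED.ee 1) W (s, y)) x))
        = ∫ x in D.Ω, ((VED.D (VED.ee 0) W (s, x) ^ 2 + VED.D (VED.ee 1) W (s, x) ^ 2)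
          + (W (s, x) * VED.D (VED.ee 0) (VED.D (VED.ee 0) W) (s, x)
            + W (s, x) * VED.D (VED.ee 1) (VED.D (VED.ee 1) W) (s, x))) := by
      apply setIntegral_congr_fun hΩmeas
      intro x _
      simp only
      rw [VED.pd_mul ((sW s).differentiable (by simp) x) ((sDW s 0).differentiable (by simp) x) 0,
        VED.pd_mul ((sW s).differentiable (by simp) x) ((sDW s 1).differentiable (by simp) x) 1,
        hpdW s x 0, hpdW s x 1, hpdDW s 0 0 x, hpdDW s 1 1 x]
      ring
    have hR : (∫ x in frontier D.Ω, ((fun y => W (s, y) * VED.D (VED.ee 0) W (s, y)) x * D.n x 0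
        + (fun y => W (s, y) * VED.D (VED.ee 1) W (s, y)) x * D.n x 1) ∂D.σ)
        = h s * ∫ x in frontier D.Ω, (VED.D (VED.ee 0) W (s, x) * D.n x 0
          + VED.D (VED.ee 1) W (s, x) * D.n x 1) ∂D.σ := by
      rw [← integral_const_mul]
      apply setIntegral_congr_fun isClosed_frontier.measurableSet
      intro x hx
      have hbc := hsol.vortBC s hs x hx
      rw [VED.vort_eq hu] at hbc
      rw [← hWdef] at hbc
      simp only
      rw [hbc]
      ring
    rw [hL, hR, ← idC s, idE s hs, mul_zero] at hD
    have igrad : IntegrableOn (fun x : Pt =>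
        VED.D (VED.ee 0) W (s, x) ^ 2 + VED.D (VED.ee 1) W (s, x) ^ 2) D.Ω volume :=
      intg _ ((((contDW (VED.ee 0)).comp (continuous_const.prodMk continuous_id)).pow 2).add
        (((contDW (VED.ee 1)).comp (continuous_const.prodMk continuous_id)).pow 2))
    have iWlap : IntegrableOn (fun x : Pt =>
        W (s, x) * VED.D (VED.ee 0) (VED.D (VED.ee 0) W) (s, x)
          + W (s, x) * VED.D (VED.ee 1) (VED.D (VED.ee 1) W) (s, x)) D.Ω volume :=
      intg _ (((contW.comp (continuous_const.prodMk continuous_id)).mul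
          (((VED.D_smooth (VED.D_smooth hW (VED.ee 0)) (VED.ee 0)).continuous).comp
            (continuous_const.prodMk continuous_id))).add
        ((contW.comp (continuous_const.prodMk continuous_id)).mul
          (((VED.D_smooth (VED.D_smooth hW (VED.ee 1)) (VED.ee 1)).continuous).comp
            (continuous_const.prodMk continuous_id))))
    rw [integral_add igrad iWlap] at hD
    have : Jfn s + (∫ x in D.Ω, (W (s, x) * VED.D (VED.ee 0) (VED.D (VED.ee 0) W) (s, x)
        + W (s, x) * VED.D (VED.ee 1) (VED.D (VED.ee 1) W) (s, x))) = 0 := by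
      simp only [hJdef]; exact hD
    linarith [this]
  -- value of the derivative of G
  have hGval : ∀ s ∈ Set.Ioo (0:ℝ) T,
      (∫ x in D.Ω, 2 * W (s, x) * VED.D VED.et W (s, x)) = -2 * Jfn s := by
    intro s hs
    have hcongr : Set.EqOn
        (fun x => 2 * W (s, x) * VED.D VED.et W (s, x))
        (fun x => 2 * (W (s, x) * VED.D (VED.ee 0) (VED.D (VED.ee 0) W) (s, x)
            + W (s, x) * VED.D (VED.ee 1) (VED.D (VED.ee 1) W) (s, x))
          - 2 * (u s x 0 * (W (s, x) * VED.D (VED.ee 0) W (s, x))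
            + u s x 1 * (W (s, x) * VED.D (VED.ee 1) W (s, x)))) D.Ω := by
      intro x hx
      have := hveq s hs x hx
      rw [show VED.Ufun u 0 (s, x) = u s x 0 from rfl,
        show VED.Ufun u 1 (s, x) = u s x 1 from rfl] at this
      simp only
      linear_combination (2 * W (s, x)) * this
    rw [setIntegral_congr_fun hΩmeas hcongr, integral_sub, integral_const_mul,
      integral_const_mul, idF s hs, idB s hs]
    · ring
    · refine Integrable.const_mul ?_ 2
      exact intg _ ((((sW s).continuous).mul ((VED.D_smooth (VED.D_smooth hW (VED.ee 0)) (VED.ee 0)).continuous.comp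
          (continuous_const.prodMk continuous_id))).add
        (((sW s).continuous).mul ((VED.D_smooth (VED.D_smooth hW (VED.ee 1)) (VED.ee 1)).continuous.comp
          (continuous_const.prodMk continuous_id))))
    · refine Integrable.const_mul ?_ 2
      exact intg _ ((((sU s 0).continuous).mul (((sW s).continuous).mul
          ((contDW (VED.ee 0)).comp (continuous_const.prodMk continuous_id)))).add
        (((sU s 1).continuous).mul (((sW s).continuous).mul
          ((contDW (VED.ee 1)).comp (continuous_const.prodMk continuous_id)))))
  -- Poincaré inequality for the energy
  have hPoin : ∀ s : ℝ, Efn s ≤ C_P ^ 2 * Jfn s := by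
    intro s
    have hf := hPoincare (fun x => W (s, x)) (sW s)
    simp only at hf
    have hgr : (∫ x in D.Ω, gradSq (fun x => W (s, x)) x) = Jfn s := by
      simp only [hJdef]
      apply setIntegral_congr_fun hΩmeas
      intro x _
      rw [gradSq, Fin.sum_univ_two, hpdW s x 0, hpdW s x 1]
    rw [hgr] at hf
    have hL2 : L2 D.Ω (fun x => W (s, x) - 1 / vol * ∫ y in D.Ω, W (s, y))
        = Efn s ^ (1/2 : ℝ) := by
      rw [L2]
    rw [hL2] at hf
    have hsq : ∀ a : ℝ, 0 ≤ a → (a ^ (1/2 : ℝ)) ^ 2 = a := by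
      intro a ha
      rw [← Real.rpow_natCast (a ^ (1/2 : ℝ)) 2, ← Real.rpow_mul ha]
      norm_num
    have h1 : (Efn s ^ (1/2:ℝ)) ^ 2 ≤ (C_P * Jfn s ^ (1/2:ℝ)) ^ 2 := by
      apply pow_le_pow_left₀ (Real.rpow_nonneg (hEnonneg s) _) hf
    rw [hsq _ (hEnonneg s), mul_pow, hsq _ (hJnonneg s)] at h1
    exact h1
  -- energy identity E = G - I²/vol
  have hEfn_eq : ∀ s, Efn s = Gfn s - Ifn s ^ 2 / vol := by
    intro s
    have hexp : ∀ x : Pt, (W (s, x) - (1 / vol) * Ifn s) ^ 2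
        = W (s, x) ^ 2 - ((2 * ((1 / vol) * Ifn s)) * W (s, x)
            - ((1 / vol) * Ifn s) ^ 2) := by
      intro x; ring
    have iW : IntegrableOn (fun x : Pt => W (s, x)) D.Ω volume :=
      intg _ (contW.comp (continuous_const.prodMk continuous_id))
    have iW2 : IntegrableOn (fun x : Pt => W (s, x) ^ 2) D.Ω volume :=
      intg _ ((contW.comp (continuous_const.prodMk continuous_id)).pow 2)
    have iC : IntegrableOn (fun _ : Pt => ((1 / vol) * Ifn s) ^ 2) D.Ω volume :=
      integrableOn_const hbd.measure_lt_top.ne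
    have iCW : IntegrableOn (fun x : Pt => (2 * ((1 / vol) * Ifn s)) * W (s, x)) D.Ω volume :=
      iW.const_mul _
    have iSub : IntegrableOn (fun x : Pt => (2 * ((1 / vol) * Ifn s)) * W (s, x)
        - ((1 / vol) * Ifn s) ^ 2) D.Ω volume := iCW.sub iC
    simp only [hEdef]
    simp only [hexp]
    rw [integral_sub iW2 iSub, integral_sub iCW iC, integral_const_mul, setIntegral_const, measureReal_def]
    simp only [hGdef, hIdef, smul_eq_mul]
    rw [← hvoldef]
    have hvne : vol ≠ 0 := ne_of_gt hvolpos
    field_simp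
    ring
  -- derivative of E on (0,T)
  have hE' : ∀ s ∈ Set.Ioo (0:ℝ) T, HasDerivAt Efn (-2 * Jfn s) s := by
    intro s hs
    have hI2 : HasDerivAt (fun r => Ifn r ^ 2 / vol)
        ((2 * Ifn s ^ 1 * (∫ x in D.Ω, VED.D VED.et W (s, x))) / vol) s :=
      ((hI' s).fun_pow 2).div_const vol
    rw [hI'0 s hs] at hI2
    have hGd := hG' s
    rw [hGval s hs] at hGd
    have hcomb := hGd.sub hI2
    have heq : Efn = fun r => Gfn r - Ifn r ^ 2 / vol := funext hEfn_eq
    rw [heq]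
    refine hcomb.congr_deriv ?_
    ring
  -- continuity of E
  have hcontG : Continuous Gfn :=
    VED.continuous_setIntegral_param hΩmeas hbd (contW.pow 2)
  have hcontI : Continuous Ifn :=
    VED.continuous_setIntegral_param hΩmeas hbd contW
  have hcontE : Continuous Efn := by
    rw [funext hEfn_eq]
    exact hcontG.sub ((hcontI.pow 2).div_const vol)
  -- Grönwall via monotonicity
  set Phi : ℝ → ℝ := fun s => Efn s * Real.exp (2 * lam * s) with hPhidef
  have hPhi' : ∀ s ∈ Set.Ioo (0:ℝ) T,
      HasDerivAt Phi ((-2 * Jfn s) * Real.exp (2 * lam * s)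
        + Efn s * (Real.exp (2 * lam * s) * (2 * lam))) s := by
    intro s hs
    have hexp : HasDerivAt (fun r : ℝ => Real.exp (2 * lam * r))
        (Real.exp (2 * lam * s) * (2 * lam)) s := by
      have hlin : HasDerivAt (fun r : ℝ => 2 * lam * r) (2 * lam) s := by
        simpa using (hasDerivAt_id s).const_mul (2 * lam)
      exact hlin.exp
    exact (hE' s hs).mul hexp
  have hanti : AntitoneOn Phi (Set.Icc 0 T) := by
    apply antitoneOn_of_deriv_nonpos (convex_Icc 0 T)
    · exact (hcontE.mul (Real.continuous_exp.comp
        (continuous_const.mul continuous_id))).continuousOn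
    · intro s hs
      rw [interior_Icc] at hs
      exact (hPhi' s hs).differentiableAt.differentiableWithinAt
    · intro s hs
      rw [interior_Icc] at hs
      rw [(hPhi' s hs).deriv]
      have hJE : lam * Efn s ≤ Jfn s := by
        have := hPoin s
        rw [hlamdef]
        rw [div_mul_eq_mul_div, div_le_iff₀ (by positivity : (0:ℝ) < C_P ^ 2)]
        nlinarith [this]
      nlinarith [Real.exp_pos (2 * lam * s), hEnonneg s, hJE, hlampos]
  have hkey : Phi t ≤ Phi 0 :=
    hanti ⟨le_refl 0, hT.le⟩ ⟨ht0, htT'⟩ ht0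
  have hPhi0 : Phi 0 = Efn 0 := by
    rw [hPhidef]; simp
  have hdecay : Efn t ≤ Efn 0 * Real.exp (-(2 * lam * t)) := by
    rw [Real.exp_neg, ← div_eq_mul_inv, le_div_iff₀ (Real.exp_pos _)]
    rw [hPhi0] at hkey
    exact hkey
  -- identify the L2 norms with the energies
  have hLHS : L2 D.Ω (fun x => vort (u t) x
      - 1 / vol * ∫ y in D.Ω, vort (u t) y) = Efn t ^ (1/2 : ℝ) := by
    rw [L2]
    simp only [hEdef, hIdef, VED.vort_eq hu, ← hWdef]
  have h0W : ∀ x ∈ D.Ω, vort u₀ x = W (0, x) := by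
    intro x hx
    have hv0 : vort u₀ x = vort (u 0) x := by
      have ev1 : (fun y => u₀ y 1) =ᶠ[nhds x] (fun y => u 0 y 1) :=
        Filter.eventuallyEq_of_mem (D.isOpen.mem_nhds hx)
          fun y hy => by rw [hsol.init y hy]
      have ev0 : (fun y => u₀ y 0) =ᶠ[nhds x] (fun y => u 0 y 0) :=
        Filter.eventuallyEq_of_mem (D.isOpen.mem_nhds hx)
          fun y hy => by rw [hsol.init y hy]
      rw [vort, vort, pd, pd, pd, pd, ev1.fderiv_eq, ev0.fderiv_eq]
    rw [hv0, VED.vort_eq hu, hWdef]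
  have hI0eq : (∫ y in D.Ω, vort u₀ y) = Ifn 0 := by
    simp only [hIdef]
    exact setIntegral_congr_fun hΩmeas fun x hx => h0W x hx
  have hRHS : L2 D.Ω (fun x => vort u₀ x
      - 1 / vol * ∫ y in D.Ω, vort u₀ y) = Efn 0 ^ (1/2 : ℝ) := by
    have hEq0 : (∫ x in D.Ω, (vort u₀ x - 1 / vol * ∫ y in D.Ω, vort u₀ y) ^ 2)
        = Efn 0 := by
      simp only [hEdef]
      apply setIntegral_congr_fun hΩmeas
      intro x hx
      simp only
      rw [h0W x hx, hI0eq]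
    rw [L2, hEq0]
  rw [hLHS, hRHS]
  calc Efn t ^ (1/2:ℝ) ≤ (Efn 0 * Real.exp (-(2 * lam * t))) ^ (1/2:ℝ) :=
        Real.rpow_le_rpow (hEnonneg t) hdecay (by norm_num)
    _ = Efn 0 ^ (1/2:ℝ) * Real.exp (-(1 / C_P ^ 2) * t) := by
        rw [Real.mul_rpow (hEnonneg 0) (Real.exp_pos _).le, ← Real.exp_mul]
        congr 2
        rw [hlamdef]
        ring
end
end
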